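/- If ε: E(Γ) → E(Γ′) is a cyclic bijection between finite graphs, then ε induces a bijection β: Set¹Γ → Set¹Γ′ between the C1-sets, given by S_e ↦ S_{ε(e)}, and this bijection preserves cardinalities: #S = #β(S) for every C1-set S of Γ. -/

import Mathlib

/-! Basic theory of finite multigraphs (loops and multiple edges allowed),
following Caporaso–Viviani, "Torelli theorem for graphs and tropical curves". -/

noncomputable section

open scoped Classical

/-- A finite multigraph: finite types of vertices and edges, each edge having two
(possibly equal) endpoints `fst e` and `snd e`. -/
structure Multigraph where
  V : Type
  E : Type
  [fintV : Fintype V]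
  [fintE : Fintype E]
  fst : E → V
  snd : E → V

namespace Multigraph

attribute [instance] Multigraph.fintV Multigraph.fintE

variable (G : Multigraph)

/-- Two vertices are adjacent if some edge joins them. -/
def Adj (v w : G.V) : Prop :=
  ∃ e : G.E, (G.fst e = v ∧ G.snd e = w) ∨ (G.fst e = w ∧ G.snd e = v)

/-- Reachability by walks. -/
def Reachable (v w : G.V) : Prop := Relation.ReflTransGen G.Adj v w

def Preconnected : Prop := ∀ v w : G.V, G.Reachable v w

def Connected : Prop := Nonempty G.V ∧ G.Preconnected

/-- The number of connected components. -/
def numComponents : ℕ := Nat.card (Quot G.Adj)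

/-- The first Betti number `b₁ = c - #V + #E`. -/
def b1 : ℤ := (G.numComponents : ℤ) + (Nat.card G.E : ℤ) - (Nat.card G.V : ℤ)

/-- The spanning subgraph `Γ∖S` obtained by deleting the edges in `S`. -/
def deleteEdges (S : Set G.E) : Multigraph :=
  { V := G.V
    E := {e : G.E // e ∉ S}
    fst := fun e => G.fst e.1
    snd := fun e => G.snd e.1
    fintV := G.fintV
    fintE := Fintype.ofFinite _ }

/-- The subgraph spanned by a set of edges: its vertices are the incident vertices. -/
def restrict (S : Set G.E) : Multigraph :=
  { V := {v : G.V // ∃ e ∈ S, G.fst e = v ∨ G.snd e = v}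
    E := ↥S
    fst := fun e => ⟨G.fst e.1, e.1, e.2, Or.inl rfl⟩
    snd := fun e => ⟨G.snd e.1, e.1, e.2, Or.inr rfl⟩
    fintV := Fintype.ofFinite _
    fintE := Fintype.ofFinite _ }

/-- The graph `Γ(S)` obtained by contracting all the edges *not* in `S`; its vertices
are the connected components of `Γ∖S` and its edges are the elements of `S`. -/
def contractCompl (S : Set G.E) : Multigraph :=
  { V := Quot (G.deleteEdges S).Adj
    E := ↥S
    fst := fun e => Quot.mk _ (G.fst e.1)
    snd := fun e => Quot.mk _ (G.snd e.1)
    fintV := Fintype.ofFinite _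
    fintE := Fintype.ofFinite _ }

/-- An edge is separating if its endpoints are no longer joined after deleting it. -/
def IsSeparating (e : G.E) : Prop :=
  ¬ (G.deleteEdges {e}).Reachable (G.fst e) (G.snd e)

/-- The set of separating edges. -/
def sepEdges : Set G.E := {e | G.IsSeparating e}

/-- The graph with its isolated vertices removed. -/
def core : Multigraph := G.restrict Set.univ

/-- A cycle: a connected graph, free from separating edges, with `b₁ = 1`. -/
def IsCycleGraph : Prop := G.Connected ∧ G.sepEdges = ∅ ∧ G.b1 = 1

/-- `S` is (the edge set of) a cycle subgraph of `G`. -/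
def IsCycleSet (S : Set G.E) : Prop := (G.restrict S).IsCycleGraph

/-- `S` is a C1-set of `G`: writing `Γ̃ = Γ∖E(Γ)_sep`, the set `S` consists of
non-separating edges, the contraction `Γ̃(S)` (with isolated vertices removed) is a
cycle, and `Γ̃∖S` has no separating edges.  (Equivalently, `S` is a C1-set of the
connected component of `Γ̃` containing it.) -/
def IsC1 (S : Set G.E) : Prop :=
  (∀ e ∈ S, ¬ G.IsSeparating e) ∧
  (((G.deleteEdges G.sepEdges).contractCompl {e | e.1 ∈ S}).core).IsCycleGraph ∧
  ((G.deleteEdges G.sepEdges).deleteEdges {e | e.1 ∈ S}).sepEdges = ∅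

/-! ### Orientations -/

/-- An orientation is encoded by a map `E → Bool`; `src` is the source of an edge. -/
def src (o : G.E → Bool) (e : G.E) : G.V := if o e then G.fst e else G.snd e

/-- The target of an edge under the orientation `o`. -/
def tgt (o : G.E → Bool) (e : G.E) : G.V := if o e then G.snd e else G.fst e

/-- An orientation is totally cyclic if there is no nonempty set of vertices `W`,
whose complement meets the component of a vertex of `W`, such that all edges between
`W` and its complement go in the same direction. -/
def IsTotallyCyclic (o : G.E → Bool) : Prop :=
  ∀ W : Set G.V, W.Nonempty →
    (∃ v ∈ W, ∃ w, w ∉ W ∧ G.Reachable v w) →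
    (∃ e, G.src o e ∈ W ∧ G.tgt o e ∉ W) ∧ (∃ e, G.tgt o e ∈ W ∧ G.src o e ∉ W)

/-- Directed reachability with respect to an orientation. -/
def DReachable (o : G.E → Bool) (v w : G.V) : Prop :=
  Relation.ReflTransGen (fun a b => ∃ e, G.src o e = a ∧ G.tgt o e = b) v w

/-! ### Homology -/

/-- Incidence of an oriented edge on a vertex: `(tgt e = v) - (src e = v)`. -/
def inc (o : G.E → Bool) (e : G.E) (v : G.V) : ℤ :=
  (if G.tgt o e = v then 1 else 0) - (if G.src o e = v then 1 else 0)

/-- `H₁(Γ,ℤ)`: the kernel of the boundary map `C₁(Γ,ℤ) → C₀(Γ,ℤ)`. -/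
def cycleSpace (o : G.E → Bool) : Submodule ℤ (G.E → ℤ) where
  carrier := {f | ∀ v, ∑ e, f e * G.inc o e v = 0}
  zero_mem' := by intro v; simp
  add_mem' := by
    intro f g hf hg v
    simp only [Set.mem_setOf_eq] at hf hg
    simp [add_mul, Finset.sum_add_distrib, hf v, hg v]
  smul_mem' := by
    intro c f hf v
    simp only [Set.mem_setOf_eq] at hf
    simp [smul_eq_mul, mul_assoc, ← Finset.mul_sum, hf v]

/-- Real incidence. -/
def incR (o : G.E → Bool) (e : G.E) (v : G.V) : ℝ := (G.inc o e v : ℝ)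

/-- `H₁(Γ,ℝ)`: the kernel of the boundary map `C₁(Γ,ℝ) → C₀(Γ,ℝ)`. -/
def cycleSpaceR (o : G.E → Bool) : Submodule ℝ (G.E → ℝ) where
  carrier := {f | ∀ v, ∑ e, f e * G.incR o e v = 0}
  zero_mem' := by intro v; simp
  add_mem' := by
    intro f g hf hg v
    simp only [Set.mem_setOf_eq] at hf hg
    simp [add_mul, Finset.sum_add_distrib, hf v, hg v]
  smul_mem' := by
    intro c f hf v
    simp only [Set.mem_setOf_eq] at hf
    simp [smul_eq_mul, mul_assoc, ← Finset.mul_sum, hf v]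

/-- The indicator chain of a set of edges. -/
def indicator (S : Set G.E) : G.E → ℤ := fun e => if e ∈ S then 1 else 0

/-- `S` is a cyclically oriented cycle of `G` for the orientation `o`: `S` is a cycle
and its indicator chain is a homology class (each vertex of the cycle has one ingoing
and one outgoing edge of `S`). -/
def IsCyclicallyOriented (o : G.E → Bool) (S : Set G.E) : Prop :=
  G.IsCycleSet S ∧ G.indicator S ∈ G.cycleSpace o

/-- The coordinate functional `e*` restricted to `H₁(Γ,ℝ)`. -/
def edgeFunR (o : G.E → Bool) (e : G.E) : Module.Dual ℝ ↥(G.cycleSpaceR o) :=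
  (LinearMap.proj e).comp (G.cycleSpaceR o).subtype

/-! ### Connectivity and regularity -/

/-- The degree (valence) of a vertex; loops count twice. -/
def degree (v : G.V) : ℕ :=
  Nat.card {e : G.E // G.fst e = v} + Nat.card {e : G.E // G.snd e = v}

/-- A graph is 3-regular if every vertex has valence 3. -/
def ThreeRegular : Prop := ∀ v : G.V, G.degree v = 3

/-- Deletion of a set of vertices, together with all incident edges. -/
def deleteVerts (W : Set G.V) : Multigraph :=
  { V := {v : G.V // v ∉ W}
    E := {e : G.E // G.fst e ∉ W ∧ G.snd e ∉ W}
    fst := fun e => ⟨G.fst e.1, e.2.1⟩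
    snd := fun e => ⟨G.snd e.1, e.2.2⟩
    fintV := Fintype.ofFinite _
    fintE := Fintype.ofFinite _ }

/-- 3-edge connectivity: removing any 2 edges leaves the graph connected. -/
def EdgeConnected3 : Prop :=
  Nonempty G.V ∧ ∀ F : Set G.E, Nat.card F ≤ 2 → (G.deleteEdges F).Preconnected

/-- 3-connectivity: removing any 2 vertices (with incident edges) leaves the graph
connected. -/
def Connected3 : Prop :=
  Nonempty G.V ∧ ∀ W : Set G.V, Nat.card W ≤ 2 → (G.deleteVerts W).Preconnected

/-- Isomorphism of multigraphs. -/
def IsIsoTo (G H : Multigraph) : Prop :=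
  ∃ (fV : G.V ≃ H.V) (fE : G.E ≃ H.E), ∀ e : G.E,
    (H.fst (fE e) = fV (G.fst e) ∧ H.snd (fE e) = fV (G.snd e)) ∨
    (H.fst (fE e) = fV (G.snd e) ∧ H.snd (fE e) = fV (G.fst e))

/-- A bijection of edge sets is cyclic if it induces a bijection between cycles. -/
def IsCyclicBijection (G G' : Multigraph) (ε : G.E ≃ G'.E) : Prop :=
  ∀ S : Set G.E, G.IsCycleSet S ↔ G'.IsCycleSet (⇑ε '' S)

/-- Two orientations are equal as orientations (encodings may differ on loops). -/
def OrientEq (o₁ o₂ : G.E → Bool) : Prop :=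
  ∀ e : G.E, G.src o₁ e = G.src o₂ e ∧ G.tgt o₁ e = G.tgt o₂ e

/-- `o` is an orientation of `G` extending the orientation `φ` of `Γ∖T`. -/
def ExtendsOrient (T : Set G.E) (φ : (G.deleteEdges T).E → Bool) (o : G.E → Bool) : Prop :=
  ∀ e : (G.deleteEdges T).E,
    G.src o e.1 = (G.deleteEdges T).src φ e ∧ G.tgt o e.1 = (G.deleteEdges T).tgt φ e

end Multigraph
namespace Multigraph

variable (G : Multigraph)

/-! ### Walks -/

/-- Source of an oriented step. -/
def sSrc (s : G.E × Bool) : G.V := if s.2 then G.fst s.1 else G.snd s.1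

/-- Target of an oriented step. -/
def sTgt (s : G.E × Bool) : G.V := if s.2 then G.snd s.1 else G.fst s.1

/-- `IsWalk v p w`: `p` is a walk from `v` to `w`. -/
def IsWalk : G.V → List (G.E × Bool) → G.V → Prop
  | v, [], w => v = w
  | v, s :: p, w => G.sSrc s = v ∧ IsWalk (G.sTgt s) p w

variable {G}

theorem isWalk_nil {v w : G.V} : G.IsWalk v [] w ↔ v = w := by simp [IsWalk]

theorem isWalk_cons {v w : G.V} {s : G.E × Bool} {p} :
    G.IsWalk v (s :: p) w ↔ G.sSrc s = v ∧ G.IsWalk (G.sTgt s) p w := by simp [IsWalk]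

theorem IsWalk.append {v x w : G.V} {p q} (hp : G.IsWalk v p x) (hq : G.IsWalk x q w) :
    G.IsWalk v (p ++ q) w := by
  induction p generalizing v with
  | nil => rw [isWalk_nil] at hp; subst hp; simpa using hq
  | cons s p ih =>
    rw [isWalk_cons] at hp
    exact isWalk_cons.2 ⟨hp.1, ih hp.2⟩

theorem isWalk_append_iff {v w : G.V} {p q} :
    G.IsWalk v (p ++ q) w ↔ ∃ x, G.IsWalk v p x ∧ G.IsWalk x q w := by
  constructor
  · intro h
    induction p generalizing v with
    | nil => exact ⟨v, isWalk_nil.2 rfl, h⟩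
    | cons s p ih =>
      rw [List.cons_append, isWalk_cons] at h
      obtain ⟨x, h1, h2⟩ := ih h.2
      exact ⟨x, isWalk_cons.2 ⟨h.1, h1⟩, h2⟩
  · rintro ⟨x, h1, h2⟩; exact h1.append h2

/-- Flip the orientation of a step. -/
def sFlip (s : G.E × Bool) : G.E × Bool := (s.1, !s.2)

@[simp] theorem sSrc_sFlip (s : G.E × Bool) : G.sSrc (sFlip s) = G.sTgt s := by
  cases s with | mk e b => cases b <;> simp [sSrc, sTgt, sFlip]

@[simp] theorem sTgt_sFlip (s : G.E × Bool) : G.sTgt (sFlip s) = G.sSrc s := by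
  cases s with | mk e b => cases b <;> simp [sSrc, sTgt, sFlip]

@[simp] theorem sFlip_fst (s : G.E × Bool) : (sFlip s).1 = s.1 := rfl

theorem IsWalk.reverse {v w : G.V} {p} (h : G.IsWalk v p w) :
    G.IsWalk w (p.reverse.map sFlip) v := by
  induction p generalizing v with
  | nil => rw [isWalk_nil] at h; subst h; exact isWalk_nil.2 rfl
  | cons s p ih =>
    rw [isWalk_cons] at h
    have h2 : G.IsWalk w ((p.reverse.map sFlip) ++ [sFlip s]) v := by
      refine (ih h.2).append (isWalk_cons.2 ⟨by simp, ?_⟩)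
      simp only [sTgt_sFlip, h.1]
      exact isWalk_nil.2 rfl
    simpa using h2

theorem adj_of_step (s : G.E × Bool) : G.Adj (G.sSrc s) (G.sTgt s) := by
  cases s with | mk e b =>
  cases b
  · exact ⟨e, Or.inr ⟨rfl, rfl⟩⟩
  · exact ⟨e, Or.inl ⟨rfl, rfl⟩⟩

theorem IsWalk.reachable {v w : G.V} {p} (h : G.IsWalk v p w) : G.Reachable v w := by
  induction p generalizing v with
  | nil => rw [isWalk_nil] at h; subst h; exact Relation.ReflTransGen.refl
  | cons s p ih =>
    rw [isWalk_cons] at h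
    exact Relation.ReflTransGen.head (h.1 ▸ adj_of_step s) (ih h.2)

theorem Adj.exists_step {v w : G.V} (h : G.Adj v w) :
    ∃ s : G.E × Bool, G.sSrc s = v ∧ G.sTgt s = w := by
  obtain ⟨e, he | he⟩ := h
  · exact ⟨(e, true), by simp [sSrc, sTgt, he.1, he.2]⟩
  · exact ⟨(e, false), by simp [sSrc, sTgt, he.1, he.2]⟩

theorem reachable_iff_isWalk {v w : G.V} : G.Reachable v w ↔ ∃ p, G.IsWalk v p w := by
  constructor
  · intro h
    induction h with
    | refl => exact ⟨[], isWalk_nil.2 rfl⟩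
    | tail _ hadj ih =>
      obtain ⟨p, hp⟩ := ih
      obtain ⟨s, hs, ht⟩ := hadj.exists_step
      exact ⟨p ++ [s], hp.append (isWalk_cons.2 ⟨hs, ht ▸ isWalk_nil.2 rfl⟩)⟩
  · rintro ⟨p, hp⟩; exact hp.reachable

/-! ### Vertices of walks -/

variable (G) in
/-- The list of vertices visited by a walk. -/
def wVerts : G.V → List (G.E × Bool) → List G.V
  | v, [] => [v]
  | v, s :: p => v :: wVerts (G.sTgt s) p

@[simp] theorem wVerts_nil (v : G.V) : G.wVerts v [] = [v] := by simp [wVerts]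

@[simp] theorem wVerts_cons (v : G.V) (s : G.E × Bool) (p) :
    G.wVerts v (s :: p) = v :: G.wVerts (G.sTgt s) p := by simp [wVerts]

theorem length_wVerts (v : G.V) (p) : (G.wVerts v p).length = p.length + 1 := by
  induction p generalizing v with
  | nil => simp
  | cons s p ih => simp [ih]

theorem self_mem_wVerts (v : G.V) (p) : v ∈ G.wVerts v p := by
  cases p <;> simp

theorem IsWalk.end_mem_wVerts {v w : G.V} {p} (h : G.IsWalk v p w) : w ∈ G.wVerts v p := by
  induction p generalizing v with
  | nil => rw [isWalk_nil] at h; subst h; simp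
  | cons s p ih => simpa using Or.inr (ih (isWalk_cons.1 h).2)

theorem IsWalk.src_tgt_mem_wVerts {v w : G.V} {p} (h : G.IsWalk v p w) {s} (hs : s ∈ p) :
    G.sSrc s ∈ G.wVerts v p ∧ G.sTgt s ∈ G.wVerts v p := by
  induction p generalizing v with
  | nil => cases hs
  | cons t p ih =>
    rw [isWalk_cons] at h
    rcases List.mem_cons.1 hs with rfl | hs
    · exact ⟨by simp [h.1], by simpa using Or.inr (self_mem_wVerts _ _)⟩
    · obtain ⟨h1, h2⟩ := ih h.2 hs
      exact ⟨by simpa using Or.inr h1, by simpa using Or.inr h2⟩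

theorem mem_wVerts (v x : G.V) (p) (hx : x ∈ G.wVerts v p) :
    x = v ∨ ∃ s ∈ p, x = G.sSrc s ∨ x = G.sTgt s := by
  induction p generalizing v with
  | nil => simp at hx; exact Or.inl hx
  | cons s p ih =>
    rw [wVerts_cons] at hx
    rcases List.mem_cons.1 hx with rfl | hx
    · exact Or.inl rfl
    · rcases ih _ hx with rfl | ⟨t, ht, h⟩
      · exact Or.inr ⟨s, by simp, Or.inr rfl⟩
      · exact Or.inr ⟨t, by simp [ht], h⟩

/-- Split a walk at a visited vertex. -/
theorem IsWalk.split_at_mem {u w x : G.V} {q} (h : G.IsWalk u q w) (hx : x ∈ G.wVerts u q) :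
    ∃ q₁ q₂, q = q₁ ++ q₂ ∧ G.IsWalk u q₁ x ∧ G.IsWalk x q₂ w ∧
      (G.wVerts x q₂) <:+ (G.wVerts u q) := by
  induction q generalizing u with
  | nil =>
    simp only [wVerts_nil, List.mem_singleton] at hx
    subst hx
    exact ⟨[], [], rfl, isWalk_nil.2 rfl, h, List.suffix_refl _⟩
  | cons s q ih =>
    rw [isWalk_cons] at h
    rw [wVerts_cons] at hx
    rcases List.mem_cons.1 hx with rfl | hx
    · exact ⟨[], s :: q, rfl, isWalk_nil.2 rfl, isWalk_cons.2 h, List.suffix_refl _⟩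
    · obtain ⟨q₁, q₂, rfl, h1, h2, h3⟩ := ih h.2 hx
      exact ⟨s :: q₁, q₂, rfl, isWalk_cons.2 ⟨h.1, h1⟩, h2,
        (wVerts_cons u s _ ▸ h3.trans (List.suffix_cons _ _))⟩

/-- From any walk one can extract a walk with no repeated vertices (hence a path),
using only edges of the original walk. -/
theorem IsWalk.exists_nodup {v w : G.V} {p} (h : G.IsWalk v p w) :
    ∃ q, G.IsWalk v q w ∧ (∀ s ∈ q, ∃ s' ∈ p, s.1 = s'.1) ∧ (G.wVerts v q).Nodup := by
  induction p generalizing v with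
  | nil =>
    rw [isWalk_nil] at h; subst h
    exact ⟨[], isWalk_nil.2 rfl, by simp, by simp⟩
  | cons s p ih =>
    rw [isWalk_cons] at h
    obtain ⟨q', h1, h2, h3⟩ := ih h.2
    by_cases hv : v ∈ G.wVerts (G.sTgt s) q'
    · obtain ⟨q₁, q₂, rfl, _, hw2, hw3⟩ := h1.split_at_mem hv
      refine ⟨q₂, hw2, fun t ht => ?_, hw3.sublist.nodup h3⟩
      obtain ⟨s', hs', he⟩ := h2 t (by simp [ht])
      exact ⟨s', by simp [hs'], he⟩
    · refine ⟨s :: q', isWalk_cons.2 ⟨h.1, h1⟩, ?_, by simp [h3, hv]⟩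
      rintro t ht
      rcases List.mem_cons.1 ht with rfl | ht
      · exact ⟨t, by simp⟩
      · obtain ⟨s', hs', he⟩ := h2 t ht
        exact ⟨s', by simp [hs'], he⟩

theorem IsWalk.edges_nodup_of_wVerts_nodup {v w : G.V} {p} (h : G.IsWalk v p w)
    (hn : (G.wVerts v p).Nodup) : (p.map Prod.fst).Nodup := by
  induction p generalizing v with
  | nil => simp
  | cons s p ih =>
    rw [isWalk_cons] at h
    rw [wVerts_cons, List.nodup_cons] at hn
    refine List.nodup_cons.2 ⟨?_, ih h.2 hn.2⟩
    intro hmem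
    obtain ⟨s', hs', he⟩ := List.mem_map.1 hmem
    have hsrc : G.sSrc s' ∈ G.wVerts (G.sTgt s) p := (h.2.src_tgt_mem_wVerts hs').1
    have htgt : G.sTgt s' ∈ G.wVerts (G.sTgt s) p := (h.2.src_tgt_mem_wVerts hs').2
    have hv : v = G.sSrc s := h.1.symm
    have hor : v = G.sSrc s' ∨ v = G.sTgt s' := by
      cases s with | mk e b =>
      cases s' with | mk e' b' =>
      simp only at he
      subst he
      cases b <;> cases b' <;> simp_all [sSrc, sTgt]
    rcases hor with h' | h'
    · exact hn.1 (h' ▸ hsrc)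
    · exact hn.1 (h' ▸ htgt)

end Multigraph
namespace Multigraph

variable {G : Multigraph}

/-! ### Basic reachability -/

theorem Adj.symm {v w : G.V} (h : G.Adj v w) : G.Adj w v := by
  obtain ⟨e, he | he⟩ := h
  · exact ⟨e, Or.inr he⟩
  · exact ⟨e, Or.inl he⟩

theorem adj_symmetric : Symmetric G.Adj := fun _ _ h => h.symm

theorem Reachable.symm {v w : G.V} (h : G.Reachable v w) : G.Reachable w v :=
  (@Relation.ReflTransGen.stdSymm _ _ ⟨fun _ _ h => adj_symmetric h⟩).symm _ _ h

theorem Reachable.trans {u v w : G.V} (h : G.Reachable u v) (h' : G.Reachable v w) :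
    G.Reachable u w := Relation.ReflTransGen.trans h h'

theorem Reachable.refl (v : G.V) : G.Reachable v v := Relation.ReflTransGen.refl

theorem quot_mk_eq_of_reachable {v w : G.V} (h : G.Reachable v w) :
    Quot.mk G.Adj v = Quot.mk G.Adj w := by
  induction h with
  | refl => rfl
  | tail _ hadj ih => exact ih.trans (Quot.sound hadj)

theorem reachable_of_quot_mk_eq {v w : G.V} (h : Quot.mk G.Adj v = Quot.mk G.Adj w) :
    G.Reachable v w := by
  have h' := Quot.eq.1 h
  clear h
  induction h' with
  | rel _ _ hr => exact Relation.ReflTransGen.single hr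
  | refl => exact Reachable.refl _
  | symm _ _ _ ih => exact ih.symm
  | trans _ _ _ _ _ ih₁ ih₂ => exact ih₁.trans ih₂

/-! ### Walk transport between a graph and derived graphs -/

section Transport

variable {T C : Set G.E}

theorem sSrc_deleteEdges (s : (G.deleteEdges T).E × Bool) :
    (G.deleteEdges T).sSrc s = G.sSrc (s.1.1, s.2) := rfl

theorem sTgt_deleteEdges (s : (G.deleteEdges T).E × Bool) :
    (G.deleteEdges T).sTgt s = G.sTgt (s.1.1, s.2) := rfl

theorem sSrc_restrict (s : (G.restrict C).E × Bool) :
    ((G.restrict C).sSrc s).1 = G.sSrc (s.1.1, s.2) := by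
  rcases s with ⟨e, b⟩; cases b <;> rfl

theorem sTgt_restrict (s : (G.restrict C).E × Bool) :
    ((G.restrict C).sTgt s).1 = G.sTgt (s.1.1, s.2) := by
  rcases s with ⟨e, b⟩; cases b <;> rfl

theorem isWalk_deleteEdges_out {v w : G.V} {p} (h : (G.deleteEdges T).IsWalk v p w) :
    G.IsWalk v (p.map fun s => (s.1.1, s.2)) w := by
  induction p generalizing v with
  | nil =>
    erw [isWalk_nil] at h; subst h
    simp only [List.map_nil]
    exact isWalk_nil.2 rfl
  | cons s p ih =>
    erw [isWalk_cons] at h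
    exact isWalk_cons.2 ⟨h.1, ih h.2⟩

theorem isWalk_deleteEdges_in {v w : G.V} {p} (h : G.IsWalk v p w)
    (hp : ∀ s ∈ p, s.1 ∉ T) :
    ∃ q, (G.deleteEdges T).IsWalk v q w ∧ q.map (fun s => (s.1.1, s.2)) = p := by
  induction p generalizing v with
  | nil => rw [isWalk_nil] at h; exact ⟨[], isWalk_nil.2 h, rfl⟩
  | cons s p ih =>
    rw [isWalk_cons] at h
    obtain ⟨q, hq, hmap⟩ := ih h.2 (fun t ht => hp t (List.mem_cons_of_mem _ ht))
    refine ⟨(⟨s.1, hp s (by simp)⟩, s.2) :: q, isWalk_cons.2 ⟨h.1, hq⟩, by simp [hmap]⟩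

theorem isWalk_restrict_out {v w : (G.restrict C).V} {p} (h : (G.restrict C).IsWalk v p w) :
    G.IsWalk v.1 (p.map fun s => (s.1.1, s.2)) w.1 := by
  induction p generalizing v with
  | nil => rw [isWalk_nil] at h; subst h; exact isWalk_nil.2 rfl
  | cons s p ih =>
    rw [isWalk_cons] at h
    refine isWalk_cons.2 ⟨?_, ?_⟩
    · show G.sSrc (s.1.1, s.2) = v.1
      rw [← sSrc_restrict, h.1]
    · have := ih h.2
      rwa [sTgt_restrict] at this

theorem isWalk_restrict_in {v w : G.V} {p} (h : G.IsWalk v p w) (hp : ∀ s ∈ p, s.1 ∈ C)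
    (hv : ∃ e ∈ C, G.fst e = v ∨ G.snd e = v) (hw : ∃ e ∈ C, G.fst e = w ∨ G.snd e = w) :
    ∃ q, (G.restrict C).IsWalk ⟨v, hv⟩ q ⟨w, hw⟩ ∧ q.map (fun s => (s.1.1, s.2)) = p := by
  induction p generalizing v with
  | nil =>
    rw [isWalk_nil] at h; subst h
    exact ⟨[], isWalk_nil.2 (Subtype.ext rfl), rfl⟩
  | cons s p ih =>
    rw [isWalk_cons] at h
    have hsC : s.1 ∈ C := hp s (by simp)
    have hnext : ∃ e ∈ C, G.fst e = G.sTgt s ∨ G.snd e = G.sTgt s := by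
      refine ⟨s.1, hsC, ?_⟩
      rcases s with ⟨e, b⟩; cases b
      · exact Or.inl rfl
      · exact Or.inr rfl
    obtain ⟨q, hq, hmap⟩ := ih h.2 (fun t ht => hp t (List.mem_cons_of_mem _ ht)) hnext
    refine ⟨(⟨s.1, hsC⟩, s.2) :: q, isWalk_cons.2 ⟨?_, ?_⟩, by simp [hmap]⟩
    · apply Subtype.ext
      rw [sSrc_restrict]
      exact h.1
    · have hval : ((G.restrict C).sTgt (⟨s.1, hsC⟩, s.2)) = (⟨G.sTgt s, hnext⟩ : (G.restrict C).V) := by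
        apply Subtype.ext
        rw [sTgt_restrict]
      rw [hval]
      exact hq

/-- Reachability in an edge-deleted graph, in terms of walks in the ambient graph. -/
theorem reachable_deleteEdges_iff {v w : G.V} :
    (G.deleteEdges T).Reachable v w ↔ ∃ p, G.IsWalk v p w ∧ ∀ s ∈ p, s.1 ∉ T := by
  constructor
  · intro h
    obtain ⟨p, hp⟩ := reachable_iff_isWalk.1 h
    refine ⟨p.map fun s => (s.1.1, s.2), isWalk_deleteEdges_out hp, ?_⟩
    intro s hs
    obtain ⟨t, _, rfl⟩ := List.mem_map.1 hs
    exact t.1.2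
  · rintro ⟨p, hp, hT⟩
    obtain ⟨q, hq, _⟩ := isWalk_deleteEdges_in hp hT
    exact hq.reachable

/-- Reachability in a restricted graph, in terms of walks in the ambient graph. -/
theorem reachable_restrict_iff {v w : (G.restrict C).V} :
    (G.restrict C).Reachable v w ↔ ∃ p, G.IsWalk v.1 p w.1 ∧ ∀ s ∈ p, s.1 ∈ C := by
  constructor
  · intro h
    obtain ⟨p, hp⟩ := reachable_iff_isWalk.1 h
    refine ⟨p.map fun s => (s.1.1, s.2), isWalk_restrict_out hp, ?_⟩
    intro s hs
    obtain ⟨t, _, rfl⟩ := List.mem_map.1 hs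
    exact t.1.2
  · rintro ⟨p, hp, hC⟩
    obtain ⟨v', hv'⟩ := v
    obtain ⟨w', hw'⟩ := w
    obtain ⟨q, hq, _⟩ := isWalk_restrict_in hp hC hv' hw'
    exact hq.reachable

/-- Reachability in a restrict-then-delete graph, in terms of walks in the ambient graph. -/
theorem reachable_restrict_deleteEdges_iff {X : Set (G.restrict C).E}
    {v w : (G.restrict C).V} :
    ((G.restrict C).deleteEdges X).Reachable v w ↔
      ∃ p, G.IsWalk v.1 p w.1 ∧ ∀ s ∈ p, ∃ hc : s.1 ∈ C, (⟨s.1, hc⟩ : (G.restrict C).E) ∉ X := by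
  rw [reachable_deleteEdges_iff]
  constructor
  · rintro ⟨p, hp, hX⟩
    refine ⟨p.map fun s => (s.1.1, s.2), isWalk_restrict_out hp, ?_⟩
    intro s hs
    obtain ⟨t, ht, rfl⟩ := List.mem_map.1 hs
    exact ⟨t.1.2, hX t ht⟩
  · rintro ⟨p, hp, hpC⟩
    obtain ⟨v', hv'⟩ := v
    obtain ⟨w', hw'⟩ := w
    obtain ⟨q, hq, hmap⟩ := isWalk_restrict_in hp (fun s hs => (hpC s hs).1) hv' hw'
    refine ⟨q, hq, ?_⟩
    intro s hs
    have : (s.1.1, s.2) ∈ p := by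
      rw [← hmap]; exact List.mem_map.2 ⟨s, hs, rfl⟩
    obtain ⟨hc, hx⟩ := hpC _ this
    have : s.1 = ⟨s.1.1, hc⟩ := Subtype.ext rfl
    rwa [this]

end Transport

end Multigraph
namespace Multigraph

variable {G : Multigraph}

/-! ### Counting components -/

theorem numComponents_eq_one (h : G.Connected) : G.numComponents = 1 := by
  have hsub : Subsingleton (Quot G.Adj) := by
    constructor
    intro x y
    induction x using Quot.ind with | _ v =>
    induction y using Quot.ind with | _ w =>
    exact quot_mk_eq_of_reachable (h.2 v w)
  have hne : Nonempty (Quot G.Adj) := ⟨Quot.mk _ h.1.some⟩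
  exact Nat.card_eq_one_iff_unique.2 ⟨hsub, hne⟩

theorem card_E_deleteEdges_singleton (e : G.E) :
    Nat.card (G.deleteEdges {e}).E + 1 = Nat.card G.E := by
  classical
  have h1 : Nat.card (G.deleteEdges {e}).E = Fintype.card {x : G.E // x ≠ e} := by
    rw [Nat.card_eq_fintype_card]
    exact Fintype.card_congr (Equiv.subtypeEquivRight (fun x => by simp [Set.mem_singleton_iff]))
  rw [h1, Nat.card_eq_fintype_card]
  have h2 : Fintype.card {x : G.E // x ≠ e} = Fintype.card G.E - 1 := by
    have := Fintype.card_subtype_compl (fun x : G.E => x = e)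
    simpa [Fintype.card_subtype_eq] using this
  have h3 : 1 ≤ Fintype.card G.E := Fintype.card_pos_iff.2 ⟨e⟩
  omega

section DelQuot

variable (G) (e : G.E)

private def delQuotMap : Quot (G.deleteEdges {e}).Adj → Quot G.Adj :=
  Quot.map id (fun v w h => by
    obtain ⟨f, hf⟩ := h
    exact ⟨f.1, hf⟩)

private theorem delQuotMap_mk (v : G.V) :
    delQuotMap G e (Quot.mk (G.deleteEdges {e}).Adj v) = Quot.mk G.Adj v := rfl

private theorem delQuotMap_surjective : Function.Surjective (delQuotMap G e) := by
  intro y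
  induction y using Quot.ind with | _ v =>
  exact ⟨Quot.mk _ v, rfl⟩

private def qa : Quot (G.deleteEdges {e}).Adj := Quot.mk _ (G.fst e)
private def qb : Quot (G.deleteEdges {e}).Adj := Quot.mk _ (G.snd e)

private def psi : Quot (G.deleteEdges {e}).Adj → Quot (G.deleteEdges {e}).Adj :=
  fun x => if x = qb G e then qa G e else x

private def chi : Quot G.Adj → Quot (G.deleteEdges {e}).Adj :=
  Quot.lift (fun v => psi G e (Quot.mk _ v)) (by
    intro u v huv
    obtain ⟨f, hf⟩ := huv
    by_cases hfe : f = e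
    · rw [hfe] at hf
      rcases hf with ⟨h1, h2⟩ | ⟨h1, h2⟩
      · rw [← h1, ← h2]
        show psi G e (qa G e) = psi G e (qb G e)
        simp only [psi]
        by_cases hab : qa G e = qb G e <;> simp [hab]
      · rw [← h1, ← h2]
        show psi G e (qb G e) = psi G e (qa G e)
        simp only [psi]
        by_cases hab : qa G e = qb G e <;> simp [hab]
    · have : (G.deleteEdges {e}).Adj u v := ⟨⟨f, by simp [hfe]⟩, hf⟩
      exact congrArg (psi G e) (Quot.sound this))

private theorem chi_delQuotMap (x : Quot (G.deleteEdges {e}).Adj) :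
    chi G e (delQuotMap G e x) = psi G e x := by
  induction x using Quot.ind with | _ v => rfl

private theorem delQuotMap_chi (y : Quot G.Adj) : delQuotMap G e (chi G e y) = y := by
  induction y using Quot.ind with | _ v =>
  show delQuotMap G e (psi G e (Quot.mk _ v)) = _
  have hab : delQuotMap G e (qa G e) = delQuotMap G e (qb G e) := by
    show Quot.mk G.Adj (G.fst e) = Quot.mk G.Adj (G.snd e)
    exact Quot.sound ⟨e, Or.inl ⟨rfl, rfl⟩⟩
  simp only [psi]
  by_cases hb : Quot.mk (G.deleteEdges {e}).Adj v = qb G e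
  · rw [if_pos hb, hab, ← hb, delQuotMap_mk]
  · rw [if_neg hb, delQuotMap_mk]

private theorem psi_ne_qb (hab : qa G e ≠ qb G e) (x) : psi G e x ≠ qb G e := by
  simp only [psi]
  by_cases hb : x = qb G e <;> simp [hb, hab]

theorem numComponents_deleteEdges_le :
    (G.deleteEdges {e}).numComponents ≤ G.numComponents + 1 := by
  have hinj : Function.Injective
      (fun x : Quot (G.deleteEdges {e}).Adj =>
        if x = qb G e then (Sum.inr () : Quot G.Adj ⊕ Unit) else Sum.inl (delQuotMap G e x)) := by
    intro x y hxy
    dsimp only at hxy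
    by_cases hx : x = qb G e <;> by_cases hy : y = qb G e
    · rw [hx, hy]
    · rw [if_pos hx, if_neg hy] at hxy; exact absurd hxy (by simp)
    · rw [if_neg hx, if_pos hy] at hxy; exact absurd hxy (by simp)
    · rw [if_neg hx, if_neg hy] at hxy
      have hxy' : delQuotMap G e x = delQuotMap G e y := Sum.inl_injective hxy
      have := congrArg (chi G e) hxy'
      rw [chi_delQuotMap, chi_delQuotMap] at this
      simpa only [psi, if_neg hx, if_neg hy] using this
  have := Nat.card_le_card_of_injective _ hinj
  rw [Nat.card_sum] at this
  simpa [numComponents, Nat.card_unique] using this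

theorem numComponents_deleteEdges_of_not_separating (h : ¬ G.IsSeparating e) :
    (G.deleteEdges {e}).numComponents = G.numComponents := by
  have hab : qa G e = qb G e := by
    have hr : (G.deleteEdges {e}).Reachable (G.fst e) (G.snd e) := not_not.1 h
    exact quot_mk_eq_of_reachable hr
  have hpsi : ∀ x, psi G e x = x := by
    intro x
    simp only [psi]
    by_cases hb : x = qb G e
    · rw [if_pos hb, hb]; exact hab
    · rw [if_neg hb]
  have hinj : Function.Injective (delQuotMap G e) := by
    intro x y hxy
    have := congrArg (chi G e) hxy
    rwa [chi_delQuotMap, chi_delQuotMap, hpsi, hpsi] at this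
  exact Nat.card_eq_of_bijective _ ⟨hinj, delQuotMap_surjective G e⟩

theorem numComponents_deleteEdges_of_separating (h : G.IsSeparating e) :
    (G.deleteEdges {e}).numComponents = G.numComponents + 1 := by
  classical
  have hab : qa G e ≠ qb G e := by
    intro hab
    exact h (reachable_of_quot_mk_eq hab)
  have hchiinj : Function.Injective (chi G e) := by
    intro x y hxy
    have := congrArg (delQuotMap G e) hxy
    rwa [delQuotMap_chi, delQuotMap_chi] at this
  have hchinsurj : ¬ Function.Surjective (chi G e) := by
    intro hs
    obtain ⟨y, hy⟩ := hs (qb G e)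
    induction y using Quot.ind with | _ v =>
    exact psi_ne_qb G e hab _ hy
  haveI : Fintype (Quot G.Adj) := Fintype.ofFinite _
  haveI : Fintype (Quot (G.deleteEdges {e}).Adj) := Fintype.ofFinite _
  have hlt : Fintype.card (Quot G.Adj) < Fintype.card (Quot (G.deleteEdges {e}).Adj) :=
    Fintype.card_lt_of_injective_not_surjective _ hchiinj hchinsurj
  have h1 : G.numComponents < (G.deleteEdges {e}).numComponents := by
    simpa [numComponents, Nat.card_eq_fintype_card] using hlt
  have h2 := numComponents_deleteEdges_le G e
  omega

end DelQuot

/-- A graph with no edges has as many components as vertices. -/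
theorem numComponents_of_isEmpty_E (h : IsEmpty G.E) : G.numComponents = Nat.card G.V := by
  refine Nat.card_congr ⟨Quot.lift id (fun v w hvw => ?_), Quot.mk _, ?_, fun v => rfl⟩
  · obtain ⟨f, _⟩ := hvw
    exact h.elim f
  · intro x
    induction x using Quot.ind with | _ v => rfl

/-- `b₁ ≥ 0`: the number of vertices is at most components plus edges. -/
theorem card_V_le_numComponents_add_card_E :
    ∀ (n : ℕ) (G : Multigraph), Nat.card G.E = n →
      Nat.card G.V ≤ G.numComponents + Nat.card G.E := by
  intro n
  induction n with
  | zero =>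
    intro G hG
    have hE : IsEmpty G.E := by
      rcases isEmpty_or_nonempty G.E with h | h
      · exact h
      · exact absurd hG (by simp [Nat.card_ne_zero.2 ⟨h, inferInstance⟩])
    rw [numComponents_of_isEmpty_E hE]
    omega
  | succ n ih =>
    intro G hG
    have hne : Nonempty G.E := by
      rcases isEmpty_or_nonempty G.E with h | h
      · rw [Nat.card_of_isEmpty] at hG; omega
      · exact h
    obtain ⟨e⟩ := hne
    have hcard : Nat.card (G.deleteEdges {e}).E = n := by
      have := card_E_deleteEdges_singleton e
      omega
    have hih := ih (G.deleteEdges {e}) hcard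
    have hle := numComponents_deleteEdges_le G e
    have hV : Nat.card (G.deleteEdges {e}).V = Nat.card G.V := rfl
    omega

/-- In a graph all of whose edges are separating, `b₁ = 0`. -/
theorem card_V_eq_of_all_separating :
    ∀ (n : ℕ) (G : Multigraph), Nat.card G.E = n → (∀ e : G.E, G.IsSeparating e) →
      Nat.card G.V = G.numComponents + Nat.card G.E := by
  intro n
  induction n with
  | zero =>
    intro G hG _
    have hE : IsEmpty G.E := by
      rcases isEmpty_or_nonempty G.E with h | h
      · exact h
      · exact absurd hG (by simp [Nat.card_ne_zero.2 ⟨h, inferInstance⟩])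
    rw [numComponents_of_isEmpty_E hE]
    omega
  | succ n ih =>
    intro G hG hsep
    have hne : Nonempty G.E := by
      rcases isEmpty_or_nonempty G.E with h | h
      · rw [Nat.card_of_isEmpty] at hG; omega
      · exact h
    obtain ⟨e⟩ := hne
    have hcard : Nat.card (G.deleteEdges {e}).E = n := by
      have := card_E_deleteEdges_singleton e
      omega
    have hsep' : ∀ f : (G.deleteEdges {e}).E, (G.deleteEdges {e}).IsSeparating f := by
      intro f
      intro hreach
      apply hsep f.1
      rw [reachable_deleteEdges_iff] at hreach
      obtain ⟨p, hp, hmem⟩ := hreach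
      rw [reachable_deleteEdges_iff]
      refine ⟨p.map fun s => (s.1.1, s.2), ?_, ?_⟩
      · exact isWalk_deleteEdges_out hp
      intro s hs hsf
      obtain ⟨t, ht, rfl⟩ := List.mem_map.1 hs
      rw [Set.mem_singleton_iff] at hsf
      exact (hmem t ht) (by
        rw [Set.mem_singleton_iff]
        exact Subtype.ext hsf)
    have hih := ih (G.deleteEdges {e}) hcard hsep'
    have hc := numComponents_deleteEdges_of_separating G e (hsep e)
    have hV : Nat.card (G.deleteEdges {e}).V = Nat.card G.V := rfl
    omega

end Multigraph
namespace Multigraph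

/-! ### Isomorphisms of multigraphs -/

/-- An isomorphism of multigraphs (bundled). -/
structure GIso (A B : Multigraph) where
  fV : A.V ≃ B.V
  fE : A.E ≃ B.E
  compat : ∀ e : A.E,
    (B.fst (fE e) = fV (A.fst e) ∧ B.snd (fE e) = fV (A.snd e)) ∨
    (B.fst (fE e) = fV (A.snd e) ∧ B.snd (fE e) = fV (A.fst e))

namespace GIso

variable {A B : Multigraph}

def symm (φ : GIso A B) : GIso B A where
  fV := φ.fV.symm
  fE := φ.fE.symm
  compat := by
    intro e
    rcases φ.compat (φ.fE.symm e) with ⟨h1, h2⟩ | ⟨h1, h2⟩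
    · rw [Equiv.apply_symm_apply] at h1 h2
      left
      constructor
      · rw [h1, Equiv.symm_apply_apply]
      · rw [h2, Equiv.symm_apply_apply]
    · rw [Equiv.apply_symm_apply] at h1 h2
      right
      constructor
      · rw [h2, Equiv.symm_apply_apply]
      · rw [h1, Equiv.symm_apply_apply]

theorem adj (φ : GIso A B) {v w : A.V} (h : A.Adj v w) : B.Adj (φ.fV v) (φ.fV w) := by
  obtain ⟨e, he⟩ := h
  refine ⟨φ.fE e, ?_⟩
  rcases φ.compat e with ⟨h1, h2⟩ | ⟨h1, h2⟩ <;>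
    rcases he with ⟨g1, g2⟩ | ⟨g1, g2⟩
  · exact Or.inl ⟨by rw [h1, g1], by rw [h2, g2]⟩
  · exact Or.inr ⟨by rw [h1, g1], by rw [h2, g2]⟩
  · exact Or.inr ⟨by rw [h1, g2], by rw [h2, g1]⟩
  · exact Or.inl ⟨by rw [h1, g2], by rw [h2, g1]⟩

theorem adj_iff (φ : GIso A B) {v w : A.V} : A.Adj v w ↔ B.Adj (φ.fV v) (φ.fV w) := by
  constructor
  · exact φ.adj
  · intro h
    have := φ.symm.adj h
    simpa [symm] using this

theorem reachable (φ : GIso A B) {v w : A.V} (h : A.Reachable v w) : B.Reachable (φ.fV v) (φ.fV w) := by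
  induction h with
  | refl => exact Reachable.refl _
  | tail _ hadj ih => exact Relation.ReflTransGen.tail ih (φ.adj hadj)

theorem reachable_iff (φ : GIso A B) {v w : A.V} :
    A.Reachable v w ↔ B.Reachable (φ.fV v) (φ.fV w) := by
  constructor
  · exact φ.reachable
  · intro h
    have h2 := φ.symm.reachable h
    simpa [GIso.symm] using h2

theorem connected_iff (φ : GIso A B) : A.Connected ↔ B.Connected := by
  constructor
  · rintro ⟨hne, hpre⟩
    refine ⟨⟨φ.fV hne.some⟩, fun v w => ?_⟩
    have := φ.reachable (hpre (φ.fV.symm v) (φ.fV.symm w))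
    simpa using this
  · rintro ⟨hne, hpre⟩
    refine ⟨⟨φ.fV.symm hne.some⟩, fun v w => ?_⟩
    have := φ.symm.reachable (hpre (φ.fV v) (φ.fV w))
    simpa [symm] using this

theorem numComponents_eq (φ : GIso A B) : A.numComponents = B.numComponents := by
  exact Nat.card_congr (Quot.congr φ.fV (fun v w => φ.adj_iff))

theorem b1_eq (φ : GIso A B) : A.b1 = B.b1 := by
  unfold b1
  rw [φ.numComponents_eq, Nat.card_congr φ.fE, Nat.card_congr φ.fV]

/-- The induced isomorphism on edge-deleted graphs. -/
def delete (φ : GIso A B) (T : Set A.E) (T' : Set B.E) (hT : ∀ e, e ∈ T ↔ φ.fE e ∈ T') :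
    GIso (A.deleteEdges T) (B.deleteEdges T') where
  fV := φ.fV
  fE := (Equiv.subtypeEquiv φ.fE (fun e => not_congr (hT e)))
  compat := by
    intro e
    exact φ.compat e.1

theorem isSeparating_iff (φ : GIso A B) (e : A.E) :
    A.IsSeparating e ↔ B.IsSeparating (φ.fE e) := by
  have hT : ∀ x, x ∈ ({e} : Set A.E) ↔ φ.fE x ∈ ({φ.fE e} : Set B.E) := by
    intro x
    simp [Set.mem_singleton_iff, φ.fE.injective.eq_iff]
  have hψ : ∀ v : A.V, (φ.delete {e} {φ.fE e} hT).fV v = φ.fV v := fun _ => rfl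
  have key := (φ.delete {e} {φ.fE e} hT).reachable_iff (v := A.fst e) (w := A.snd e)
  rw [hψ, hψ] at key
  unfold IsSeparating
  rw [key]
  rcases φ.compat e with ⟨h1, h2⟩ | ⟨h1, h2⟩
  · rw [h1, h2]
  · rw [h1, h2]
    exact not_congr ⟨Reachable.symm, Reachable.symm⟩

theorem sepEdges_eq_empty_iff (φ : GIso A B) : A.sepEdges = ∅ ↔ B.sepEdges = ∅ := by
  simp only [Set.eq_empty_iff_forall_notMem, sepEdges, Set.mem_setOf_eq]
  constructor
  · intro h e
    have := h (φ.fE.symm e)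
    rw [φ.isSeparating_iff, Equiv.apply_symm_apply] at this
    exact this
  · intro h e
    rw [φ.isSeparating_iff]
    exact h _

theorem isCycleGraph_iff (φ : GIso A B) : A.IsCycleGraph ↔ B.IsCycleGraph := by
  unfold IsCycleGraph
  rw [φ.connected_iff, φ.sepEdges_eq_empty_iff, φ.b1_eq]

end GIso

variable {G : Multigraph}

/-- The restriction of a deleted graph is isomorphic to the restriction of the
original graph to the corresponding edge set. -/
def restrictDeleteGIso (T : Set G.E) (D : Set (G.deleteEdges T).E) :
    GIso ((G.deleteEdges T).restrict D) (G.restrict (Subtype.val '' D)) where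
  fV := Equiv.subtypeEquivRight (by
    intro v
    constructor
    · rintro ⟨ed, hD, h⟩
      exact ⟨ed.1, ⟨ed, hD, rfl⟩, h⟩
    · rintro ⟨e, ⟨ed, hD, rfl⟩, h⟩
      exact ⟨ed, hD, h⟩)
  fE := Equiv.ofBijective (fun x => ⟨x.1.1, ⟨x.1, x.2, rfl⟩⟩) (by
    constructor
    · intro x y hxy
      dsimp only at hxy
      erw [Subtype.mk_eq_mk] at hxy
      exact Subtype.ext (Subtype.ext hxy)
    · rintro ⟨e, ⟨ed, hD, rfl⟩⟩
      exact ⟨⟨ed, hD⟩, rfl⟩)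
  compat := by
    intro e
    left
    constructor
    · apply Subtype.ext; rfl
    · apply Subtype.ext; rfl

/-- Cycles of an edge-deleted graph are exactly cycles of the original graph
avoiding the deleted edges. -/
theorem isCycleSet_deleteEdges_iff (T : Set G.E) (D : Set (G.deleteEdges T).E) :
    (G.deleteEdges T).IsCycleSet D ↔ G.IsCycleSet (Subtype.val '' D) :=
  (restrictDeleteGIso T D).isCycleGraph_iff

end Multigraph
namespace Multigraph

variable {G : Multigraph}

/-! ### Edges on cycles are exactly the non-separating edges -/

theorem not_separating_of_mem_cycleSet {C : Set G.E} (hC : G.IsCycleSet C) {e : G.E}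
    (he : e ∈ C) : ¬ G.IsSeparating e := by
  intro hsep
  obtain ⟨_, hsepC, _⟩ := hC
  have her : ¬ (G.restrict C).IsSeparating ⟨e, he⟩ := by
    intro hs
    have : (⟨e, he⟩ : (G.restrict C).E) ∈ (G.restrict C).sepEdges := hs
    rw [hsepC] at this
    exact this
  have hr := not_not.1 her
  rw [reachable_restrict_deleteEdges_iff] at hr
  obtain ⟨p, hp, hmem⟩ := hr
  apply hsep
  rw [reachable_deleteEdges_iff]
  refine ⟨p, ?_, ?_⟩
  · exact hp
  · intro s hs hse
    obtain ⟨hc, hne⟩ := hmem s hs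
    rw [Set.mem_singleton_iff] at hse
    exact hne (by erw [Set.mem_singleton_iff]; exact Subtype.ext hse)

theorem exists_cycleSet_of_not_separating {e : G.E} (h : ¬ G.IsSeparating e) :
    ∃ C : Set G.E, G.IsCycleSet C ∧ e ∈ C := by
  classical
  have hr := not_not.1 h
  rw [reachable_deleteEdges_iff] at hr
  obtain ⟨p₀, hp₀, hmem₀⟩ := hr
  -- a walk from `snd e` to `fst e` avoiding `e`
  have hrev : G.IsWalk (G.snd e) (p₀.reverse.map sFlip) (G.fst e) := hp₀.reverse
  have hrevmem : ∀ s ∈ p₀.reverse.map sFlip, s.1 ≠ e := by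
    intro s hs
    obtain ⟨t, ht, rfl⟩ := List.mem_map.1 hs
    have := hmem₀ t (List.mem_reverse.1 ht)
    simpa [Set.mem_singleton_iff] using this
  obtain ⟨p, hp, hpsub, hnodup⟩ := hrev.exists_nodup
  have hpne : ∀ s ∈ p, s.1 ≠ e := by
    intro s hs
    obtain ⟨s', hs', heq⟩ := hpsub s hs
    rw [heq]
    exact hrevmem s' hs'
  -- the cycle
  set el : List G.E := e :: p.map Prod.fst with hel
  set C : Set G.E := {f | f ∈ el} with hCdef
  have heC : e ∈ C := by simp [hCdef, hel]
  have hpC : ∀ s ∈ p, s.1 ∈ C := by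
    intro s hs
    simp only [hCdef, hel, Set.mem_setOf_eq, List.mem_cons, List.mem_map]
    exact Or.inr ⟨s, hs, rfl⟩
  have helnodup : el.Nodup := by
    rw [hel, List.nodup_cons]
    constructor
    · intro hmem
      obtain ⟨s, hs, heq⟩ := List.mem_map.1 hmem
      exact hpne s hs heq
    · exact hp.edges_nodup_of_wVerts_nodup hnodup
  -- incident vertices are exactly the walk vertices
  set L : List G.V := G.wVerts (G.snd e) p with hL
  have hsndL : G.snd e ∈ L := self_mem_wVerts _ _
  have hfstL : G.fst e ∈ L := hp.end_mem_wVerts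
  have hVset : {v : G.V | ∃ f ∈ C, G.fst f = v ∨ G.snd f = v} = {v | v ∈ L} := by
    ext v
    simp only [Set.mem_setOf_eq]
    constructor
    · rintro ⟨f, hf, hv⟩
      simp only [hCdef, hel, Set.mem_setOf_eq, List.mem_cons, List.mem_map] at hf
      rcases hf with rfl | ⟨s, hs, rfl⟩
      · rcases hv with rfl | rfl
        · exact hfstL
        · exact hsndL
      · have hm := hp.src_tgt_mem_wVerts hs
        rcases hv with hv | hv
        · rcases s with ⟨f, b⟩
          cases b
          · exact hv ▸ hm.2
          · exact hv ▸ hm.1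
        · rcases s with ⟨f, b⟩
          cases b
          · exact hv ▸ hm.1
          · exact hv ▸ hm.2
    · intro hv
      rcases mem_wVerts _ _ _ hv with rfl | ⟨s, hs, hv'⟩
      · exact ⟨e, heC, Or.inr rfl⟩
      · refine ⟨s.1, hpC s hs, ?_⟩
        rcases s with ⟨f, b⟩
        cases b
        · rcases hv' with rfl | rfl
          · exact Or.inr rfl
          · exact Or.inl rfl
        · rcases hv' with rfl | rfl
          · exact Or.inl rfl
          · exact Or.inr rfl
  -- cardinalities
  have hcardE : Nat.card (G.restrict C).E = p.length + 1 := by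
    have h1 : Nat.card (G.restrict C).E = C.ncard := Nat.card_coe_set_eq C
    have h2 : C = ↑el.toFinset := by
      ext f; simp [hCdef]
    rw [h1, h2, Set.ncard_coe_finset, List.toFinset_card_of_nodup helnodup]
    simp [hel]
  have hcardV : Nat.card (G.restrict C).V = p.length + 1 := by
    have h1 : Nat.card (G.restrict C).V = Nat.card {v : G.V | ∃ f ∈ C, G.fst f = v ∨ G.snd f = v} := rfl
    have h2 : {v : G.V | ∃ f ∈ C, G.fst f = v ∨ G.snd f = v} = ↑L.toFinset := by
      rw [hVset]; ext v; simp
    rw [h1, h2, Nat.card_coe_set_eq, Set.ncard_coe_finset,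
      List.toFinset_card_of_nodup hnodup]
    simp [hL, length_wVerts]
  -- connectivity
  have hsndInc : ∃ f ∈ C, G.fst f = G.snd e ∨ G.snd f = G.snd e := ⟨e, heC, Or.inr rfl⟩
  have hub : ∀ (v : G.V) (hv : ∃ f ∈ C, G.fst f = v ∨ G.snd f = v),
      (G.restrict C).Reachable ⟨G.snd e, hsndInc⟩ ⟨v, hv⟩ := by
    intro v hv
    have hvL : v ∈ L := by
      have hv' : v ∈ {v : G.V | ∃ f ∈ C, G.fst f = v ∨ G.snd f = v} := hv
      rw [hVset] at hv'
      exact hv'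
    obtain ⟨p₁, p₂, rfl, hw1, _, _⟩ := hp.split_at_mem hvL
    erw [reachable_restrict_iff]
    refine ⟨p₁, hw1, fun s hs => hpC s (by simp [hs])⟩
  have hconn : (G.restrict C).Connected := by
    refine ⟨⟨⟨G.snd e, hsndInc⟩⟩, fun x y => ?_⟩
    obtain ⟨x', hx'⟩ := x
    obtain ⟨y', hy'⟩ := y
    exact (hub x' hx').symm.trans (hub y' hy')
  -- bridgelessness
  have hbridge : (G.restrict C).sepEdges = ∅ := by
    rw [Set.eq_empty_iff_forall_notMem]
    rintro ⟨f, hf⟩ hsepf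
    have hf' := hf
    simp only [hCdef, hel, Set.mem_setOf_eq, List.mem_cons, List.mem_map] at hf'
    apply hsepf
    rcases hf' with rfl | ⟨s₀, hs₀, rfl⟩
    · -- f = e : go around via p
      rw [reachable_restrict_deleteEdges_iff]
      refine ⟨p.reverse.map sFlip, hp.reverse, ?_⟩
      intro s hs
      obtain ⟨t, ht, rfl⟩ := List.mem_map.1 hs
      have htp := List.mem_reverse.1 ht
      refine ⟨hpC t htp, ?_⟩
      erw [Set.mem_singleton_iff]
      intro hcontra
      exact hpne t htp (congrArg Subtype.val hcontra)
    · -- f is an edge of p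
      obtain ⟨p₁, p₂, rfl⟩ := List.append_of_mem hs₀
      obtain ⟨x, hw1, hw2⟩ := isWalk_append_iff.1 hp
      rw [isWalk_cons] at hw2
      have hnd := hp.edges_nodup_of_wVerts_nodup hnodup
      rw [List.map_append, List.map_cons, List.nodup_append] at hnd
      have hf1 : s₀.1 ∉ p₁.map Prod.fst := by
        intro hmem
        exact hnd.2.2 _ hmem _ (by simp) rfl
      have hf2 : s₀.1 ∉ p₂.map Prod.fst := by
        have := hnd.2.1
        rw [List.nodup_cons] at this
        exact this.1
      -- walk from sSrc s₀ to sTgt s₀ around the other way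
      have hW : G.IsWalk (G.sSrc s₀) ((p₁.reverse.map sFlip) ++ (e, false) :: (p₂.reverse.map sFlip)) (G.sTgt s₀) := by
        refine isWalk_append_iff.2 ⟨G.snd e, ?_, ?_⟩
        · have := hw1.reverse
          rwa [← hw2.1] at this
        · refine isWalk_cons.2 ⟨rfl, ?_⟩
          have := hw2.2.reverse
          simpa [sTgt] using this
      have hWmem : ∀ s ∈ ((p₁.reverse.map sFlip) ++ (e, false) :: (p₂.reverse.map sFlip)),
          s.1 ∈ C ∧ s.1 ≠ s₀.1 := by
        intro s hs
        rcases List.mem_append.1 hs with hs | hs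
        · obtain ⟨t, ht, rfl⟩ := List.mem_map.1 hs
          have htp := List.mem_reverse.1 ht
          refine ⟨hpC t (by simp [htp]), ?_⟩
          intro hcontra
          exact hf1 (hcontra ▸ List.mem_map.2 ⟨t, htp, rfl⟩)
        · rcases List.mem_cons.1 hs with rfl | hs
          · refine ⟨heC, ?_⟩
            intro hcontra
            exact hpne s₀ (by simp) hcontra.symm
          · obtain ⟨t, ht, rfl⟩ := List.mem_map.1 hs
            have htp := List.mem_reverse.1 ht
            refine ⟨hpC t (by simp [htp]), ?_⟩
            intro hcontra
            exact hf2 (hcontra ▸ List.mem_map.2 ⟨t, htp, rfl⟩)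
      -- package as reachability in the restricted graph minus the edge
      have hreach : ∀ (h1 : ∃ f ∈ C, G.fst f = G.sSrc s₀ ∨ G.snd f = G.sSrc s₀)
          (h2 : ∃ f ∈ C, G.fst f = G.sTgt s₀ ∨ G.snd f = G.sTgt s₀),
          ((G.restrict C).deleteEdges {⟨s₀.1, hf⟩}).Reachable ⟨G.sSrc s₀, h1⟩ ⟨G.sTgt s₀, h2⟩ := by
        intro h1 h2
        erw [reachable_restrict_deleteEdges_iff]
        refine ⟨_, hW, ?_⟩
        intro s hs
        refine ⟨(hWmem s hs).1, ?_⟩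
        erw [Set.mem_singleton_iff]
        intro hcontra
        exact (hWmem s hs).2 (congrArg Subtype.val hcontra)
      rcases s₀ with ⟨f, b⟩
      have hinc1 : ∃ g ∈ C, G.fst g = G.fst f ∨ G.snd g = G.fst f := ⟨f, hf, Or.inl rfl⟩
      have hinc2 : ∃ g ∈ C, G.fst g = G.snd f ∨ G.snd g = G.snd f := ⟨f, hf, Or.inr rfl⟩
      cases b
      · -- sSrc = snd f, sTgt = fst f
        have := hreach hinc2 hinc1
        exact this.symm
      · exact hreach hinc1 hinc2
  -- b1
  have hb1 : (G.restrict C).b1 = 1 := by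
    unfold b1
    rw [numComponents_eq_one hconn, hcardE, hcardV]
    push_cast
    ring
  exact ⟨C, ⟨hconn, hbridge, hb1⟩, heC⟩

end Multigraph
namespace Multigraph

variable {G : Multigraph}

/-! ### Projection to and lifting from the contracted graph -/

theorem sSrc_contract {S : Set G.E} (s : (G.contractCompl S).E × Bool) :
    (G.contractCompl S).sSrc s = Quot.mk (G.deleteEdges S).Adj (G.sSrc (s.1.1, s.2)) := by
  rcases s with ⟨f, b⟩; cases b <;> rfl

theorem sTgt_contract {S : Set G.E} (s : (G.contractCompl S).E × Bool) :
    (G.contractCompl S).sTgt s = Quot.mk (G.deleteEdges S).Adj (G.sTgt (s.1.1, s.2)) := by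
  rcases s with ⟨f, b⟩; cases b <;> rfl

/-- Projecting a walk to the contraction: the steps of the projected walk are the
steps of the original walk whose edges lie in `S`. -/
theorem isWalk_contract_proj {S : Set G.E} {v w : G.V} {p} (h : G.IsWalk v p w) :
    ∃ q, (G.contractCompl S).IsWalk (Quot.mk (G.deleteEdges S).Adj v) q
        (Quot.mk (G.deleteEdges S).Adj w) ∧
      ∀ s ∈ q, ∃ t ∈ p, (s.1.1 = t.1 ∧ t.1 ∈ S) := by
  classical
  induction p generalizing v with
  | nil =>
    rw [isWalk_nil] at h; subst h
    exact ⟨[], isWalk_nil.2 rfl, by simp⟩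
  | cons s p ih =>
    rw [isWalk_cons] at h
    obtain ⟨q, hq, hmem⟩ := ih h.2
    by_cases hs : s.1 ∈ S
    · refine ⟨(⟨s.1, hs⟩, s.2) :: q, isWalk_cons.2 ⟨?_, ?_⟩, ?_⟩
      · rw [sSrc_contract]
        exact congrArg _ h.1
      · rw [sTgt_contract]
        exact hq
      · intro t ht
        rcases List.mem_cons.1 ht with rfl | ht
        · exact ⟨s, by simp, rfl, hs⟩
        · obtain ⟨t', ht', h'⟩ := hmem t ht
          exact ⟨t', by simp [ht'], h'⟩
    · have hadj : (G.deleteEdges S).Adj (G.sSrc s) (G.sTgt s) := by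
        have := adj_of_step (G := G.deleteEdges S) ((⟨s.1, hs⟩ : (G.deleteEdges S).E), s.2)
        exact this
      have hquot : Quot.mk (G.deleteEdges S).Adj (G.sSrc s) =
          Quot.mk (G.deleteEdges S).Adj (G.sTgt s) := Quot.sound hadj
      refine ⟨q, ?_, ?_⟩
      · rw [← h.1, hquot]
        exact hq
      · intro t ht
        obtain ⟨t', ht', h'⟩ := hmem t ht
        exact ⟨t', List.mem_cons_of_mem _ ht', h'⟩

/-- Lifting walks from the contraction back to the graph (walk version). -/
theorem contract_lift_walk {S : Set G.E} {F : Set (G.contractCompl S).E} :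
    ∀ (q : List ((G.contractCompl S).E × Bool)) {x y : (G.contractCompl S).V},
      (G.contractCompl S).IsWalk x q y → (∀ s ∈ q, s.1 ∉ F) →
      ∀ {v w : G.V}, Quot.mk (G.deleteEdges S).Adj v = x →
        Quot.mk (G.deleteEdges S).Adj w = y →
      ∃ p, G.IsWalk v p w ∧
        ∀ s ∈ p, s.1 ∉ S ∨ ∃ hs : s.1 ∈ S, (⟨s.1, hs⟩ : (G.contractCompl S).E) ∉ F := by
  intro q
  induction q with
  | nil =>
    intro x y hq hqF v w hv hw
    rw [isWalk_nil] at hq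
    subst hq
    have hr : (G.deleteEdges S).Reachable v w := reachable_of_quot_mk_eq (hv.trans hw.symm)
    rw [reachable_deleteEdges_iff] at hr
    obtain ⟨p, hp, hpS⟩ := hr
    exact ⟨p, hp, fun s hs => Or.inl (hpS s hs)⟩
  | cons s q ih =>
    intro x y hq hqF v w hv hw
    rw [isWalk_cons] at hq
    have hsrc : Quot.mk (G.deleteEdges S).Adj (G.sSrc (s.1.1, s.2)) = x := by
      rw [← sSrc_contract]
      exact hq.1
    have hr1 : (G.deleteEdges S).Reachable v (G.sSrc (s.1.1, s.2)) :=
      reachable_of_quot_mk_eq (hv.trans hsrc.symm)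
    rw [reachable_deleteEdges_iff] at hr1
    obtain ⟨p₁, hp₁, hp₁S⟩ := hr1
    obtain ⟨p₂, hp₂, hp₂mem⟩ := ih hq.2 (fun t ht => hqF t (List.mem_cons_of_mem _ ht))
      (v := G.sTgt (s.1.1, s.2)) (by rw [sTgt_contract]) hw
    refine ⟨p₁ ++ (s.1.1, s.2) :: p₂, ?_, ?_⟩
    · exact hp₁.append (isWalk_cons.2 ⟨rfl, hp₂⟩)
    · intro t ht
      rcases List.mem_append.1 ht with ht | ht
      · exact Or.inl (hp₁S t ht)
      · rcases List.mem_cons.1 ht with rfl | ht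
        · refine Or.inr ⟨s.1.2, ?_⟩
          have heq : (⟨(s.1 : (G.contractCompl S).E).1, s.1.2⟩ : (G.contractCompl S).E) = s.1 := rfl
          rw [heq]
          exact hqF s (by simp)
        · exact hp₂mem t ht

/-- Lifting reachability from the (edge-deleted) contraction back to the graph. -/
theorem contract_lift {S : Set G.E} {F : Set (G.contractCompl S).E}
    {x y : (G.contractCompl S).V}
    (h' : ((G.contractCompl S).deleteEdges F).Reachable x y)
    {v w : G.V} (hv : Quot.mk (G.deleteEdges S).Adj v = x)
    (hw : Quot.mk (G.deleteEdges S).Adj w = y) :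
    ∃ p, G.IsWalk v p w ∧
      ∀ s ∈ p, s.1 ∉ S ∨ ∃ hs : s.1 ∈ S, (⟨s.1, hs⟩ : (G.contractCompl S).E) ∉ F := by
  rw [reachable_deleteEdges_iff] at h'
  obtain ⟨q, hq, hqF⟩ := h'
  exact contract_lift_walk q hq hqF hv hw

end Multigraph
namespace Multigraph

variable {G : Multigraph}

/-! ### The cycle-theoretic characterisation of C1-sets -/

variable (G) in
/-- `e` lies on some cycle. -/
def OnCyc (e : G.E) : Prop := ∃ C, G.IsCycleSet C ∧ e ∈ C

variable (G) in
/-- Purely cycle-theoretic characterisation of C1-sets. -/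
def QSet (S : Set G.E) : Prop :=
  S.Nonempty ∧ (∀ e ∈ S, G.OnCyc e) ∧
  (∀ C, G.IsCycleSet C → (C ∩ S).Nonempty → S ⊆ C) ∧
  (∀ f, G.OnCyc f → f ∉ S → ∃ C, G.IsCycleSet C ∧ f ∈ C ∧ C ∩ S = ∅)

theorem onCyc_iff_not_separating (e : G.E) : G.OnCyc e ↔ ¬ G.IsSeparating e :=
  ⟨fun ⟨_, h1, h2⟩ => not_separating_of_mem_cycleSet h1 h2,
   exists_cycleSet_of_not_separating⟩

/-- Transfer a cycle of `G` avoiding `T` to a cycle of `G∖T`. -/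
theorem isCycleSet_delete_of_isCycleSet {T C : Set G.E} (hC : G.IsCycleSet C)
    (hdisj : ∀ e ∈ C, e ∉ T) :
    (G.deleteEdges T).IsCycleSet {x : (G.deleteEdges T).E | x.1 ∈ C} := by
  rw [isCycleSet_deleteEdges_iff]
  have heq : Subtype.val '' {x : (G.deleteEdges T).E | x.1 ∈ C} = C := by
    ext e
    constructor
    · rintro ⟨x, hx, rfl⟩
      exact hx
    · intro he
      exact ⟨⟨e, hdisj e he⟩, he, rfl⟩
  erw [heq]; assumption

end Multigraph
namespace Multigraph

theorem not_separating_of_sepEdges_empty {G : Multigraph} (h : G.sepEdges = ∅) (e : G.E) :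
    ¬ G.IsSeparating e := by
  intro hs
  rw [Set.eq_empty_iff_forall_notMem] at h
  exact h e hs

/-- Key step: if the core of the contraction of `B` along the complement of `SB` is a
cycle, then any cycle of `B` meeting `SB` contains all of `SB`. -/
theorem contraction_cycle_absorbs {B : Multigraph} {SB : Set B.E}
    (hcore : (B.contractCompl SB).core.IsCycleGraph)
    {Ct : Set B.E} (hcyct : B.IsCycleSet Ct)
    {et ft : B.E} (hetC : et ∈ Ct) (hetS : et ∈ SB) (hftS : ft ∈ SB) (hftC : ft ∉ Ct) :
    False := by
  classical
  have hnsep : ¬ (B.restrict Ct).IsSeparating ⟨et, hetC⟩ :=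
    not_separating_of_sepEdges_empty hcyct.2.1 _
  have hreach := not_not.1 hnsep
  rw [reachable_restrict_deleteEdges_iff] at hreach
  obtain ⟨p, hp, hpmem⟩ := hreach
  -- project the walk to the contraction
  obtain ⟨q, hq, hqmem⟩ := isWalk_contract_proj (S := SB) hp
  have heft : et ≠ ft := fun hc => hftC (hc ▸ hetC)
  -- distinguished edges of the contraction
  have hq' : (B.contractCompl SB).IsWalk
      ((B.contractCompl SB).fst ⟨et, hetS⟩) q ((B.contractCompl SB).snd ⟨et, hetS⟩) := hq
  -- q avoids both edges
  have hqprop : ∀ s ∈ q, s.1 ≠ (⟨et, hetS⟩ : (B.contractCompl SB).E) ∧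
      s.1 ≠ (⟨ft, hftS⟩ : (B.contractCompl SB).E) := by
    intro s hs
    obtain ⟨t, htp, hval, htS⟩ := hqmem s hs
    obtain ⟨hc, hne⟩ := hpmem t htp
    have htne : t.1 ≠ et := by
      intro hte
      apply hne
      erw [Set.mem_singleton_iff]
      exact Subtype.ext hte
    have htnf : t.1 ≠ ft := fun htf => hftC (htf ▸ hc)
    constructor
    · intro hcontra
      apply htne
      rw [← hval]
      exact congrArg Subtype.val hcontra
    · intro hcontra
      apply htnf
      rw [← hval]
      exact congrArg Subtype.val hcontra
  -- lift the walk into the core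
  have hv1 : ∃ x ∈ (Set.univ : Set (B.contractCompl SB).E),
      (B.contractCompl SB).fst x = (B.contractCompl SB).fst ⟨et, hetS⟩ ∨
      (B.contractCompl SB).snd x = (B.contractCompl SB).fst ⟨et, hetS⟩ :=
    ⟨⟨et, hetS⟩, trivial, Or.inl rfl⟩
  have hv2 : ∃ x ∈ (Set.univ : Set (B.contractCompl SB).E),
      (B.contractCompl SB).fst x = (B.contractCompl SB).snd ⟨et, hetS⟩ ∨
      (B.contractCompl SB).snd x = (B.contractCompl SB).snd ⟨et, hetS⟩ :=
    ⟨⟨et, hetS⟩, trivial, Or.inr rfl⟩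
  obtain ⟨qH, hqH, hqHmap⟩ := isWalk_restrict_in (C := (Set.univ : Set (B.contractCompl SB).E))
    hq' (fun s _ => trivial) hv1 hv2
  -- delete the edge fH
  have hqH1mem : ∀ s ∈ qH, s.1 ∉
      ({⟨⟨ft, hftS⟩, trivial⟩} : Set ((B.contractCompl SB).restrict Set.univ).E) := by
    intro s hs hcontra
    have hsq : (s.1.1, s.2) ∈ q := by
      rw [← hqHmap]
      exact List.mem_map.2 ⟨s, hs, rfl⟩
    apply (hqprop _ hsq).2
    erw [Set.mem_singleton_iff] at hcontra
    exact congrArg Subtype.val hcontra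
  obtain ⟨qH1, hqH1, hqH1map⟩ := isWalk_deleteEdges_in hqH hqH1mem
  have heHne : (⟨⟨et, hetS⟩, trivial⟩ : ((B.contractCompl SB).restrict Set.univ).E) ∉
      ({⟨⟨ft, hftS⟩, trivial⟩} : Set ((B.contractCompl SB).restrict Set.univ).E) := by
    erw [Set.mem_singleton_iff]
    intro hcontra
    exact heft (congrArg (fun x : ((B.contractCompl SB).restrict Set.univ).E => x.1.1) hcontra)
  have hqH2mem : ∀ s ∈ qH1, s.1 ∉
      ({⟨⟨⟨et, hetS⟩, trivial⟩, heHne⟩} :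
        Set (((B.contractCompl SB).restrict Set.univ).deleteEdges
          {⟨⟨ft, hftS⟩, trivial⟩}).E) := by
    intro s hs hcontra
    have h5 : (s.1.1, s.2) ∈ qH := by
      rw [← hqH1map]
      exact List.mem_map.2 ⟨s, hs, rfl⟩
    have h6 : (s.1.1.1, s.2) ∈ q := by
      rw [← hqHmap]
      exact List.mem_map.2 ⟨(s.1.1, s.2), h5, rfl⟩
    apply (hqprop _ h6).1
    erw [Set.mem_singleton_iff] at hcontra
    exact congrArg (fun x : (((B.contractCompl SB).restrict Set.univ).deleteEdges
      {⟨⟨ft, hftS⟩, trivial⟩}).E => x.1.1) hcontra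
  obtain ⟨qH2, hqH2, _⟩ := isWalk_deleteEdges_in hqH1 hqH2mem
  -- hence et is non-separating in core ∖ ft
  have hnsepE : ¬ (((B.contractCompl SB).core).deleteEdges
      {⟨⟨ft, hftS⟩, trivial⟩}).IsSeparating ⟨⟨⟨et, hetS⟩, trivial⟩, heHne⟩ := by
    intro hsepE
    exact hsepE hqH2.reachable
  -- counting
  have hfHns : ¬ (B.contractCompl SB).core.IsSeparating ⟨⟨ft, hftS⟩, trivial⟩ :=
    not_separating_of_sepEdges_empty hcore.2.1 _
  have hc1 : ((B.contractCompl SB).core.deleteEdges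
      {⟨⟨ft, hftS⟩, trivial⟩}).numComponents = 1 := by
    rw [numComponents_deleteEdges_of_not_separating _ _ hfHns, numComponents_eq_one hcore.1]
  have hc2 : (((B.contractCompl SB).core.deleteEdges
      {⟨⟨ft, hftS⟩, trivial⟩}).deleteEdges
      {⟨⟨⟨et, hetS⟩, trivial⟩, heHne⟩}).numComponents = 1 := by
    rw [numComponents_deleteEdges_of_not_separating _ _ hnsepE, hc1]
  have hN1 := card_V_le_numComponents_add_card_E
    (Nat.card ((((B.contractCompl SB).core.deleteEdges {⟨⟨ft, hftS⟩, trivial⟩}).deleteEdges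
      {⟨⟨⟨et, hetS⟩, trivial⟩, heHne⟩})).E) _ rfl
  have hE1 := card_E_deleteEdges_singleton (G := (B.contractCompl SB).core) ⟨⟨ft, hftS⟩, trivial⟩
  have hE2 := card_E_deleteEdges_singleton
    (G := (B.contractCompl SB).core.deleteEdges {⟨⟨ft, hftS⟩, trivial⟩})
    ⟨⟨⟨et, hetS⟩, trivial⟩, heHne⟩
  have hVeq : Nat.card ((((B.contractCompl SB).core.deleteEdges
      {⟨⟨ft, hftS⟩, trivial⟩}).deleteEdges {⟨⟨⟨et, hetS⟩, trivial⟩, heHne⟩})).V =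
      Nat.card (B.contractCompl SB).core.V := rfl
  have hEV : (Nat.card (B.contractCompl SB).core.E : ℤ) =
      (Nat.card (B.contractCompl SB).core.V : ℤ) := by
    have hb := hcore.2.2
    unfold b1 at hb
    rw [numComponents_eq_one hcore.1] at hb
    omega
  rw [hc2, hVeq] at hN1
  omega

variable {G : Multigraph}

theorem IsC1.qset {S : Set G.E} (h : G.IsC1 S) : G.QSet S := by
  classical
  obtain ⟨h1, h2, h3⟩ := h
  refine ⟨?_, ?_, ?_, ?_⟩
  · -- nonempty
    obtain ⟨⟨vK, xK, _, _⟩⟩ := h2.1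
    exact ⟨xK.1.1, xK.2⟩
  · -- every edge on a cycle
    exact fun e he => exists_cycleSet_of_not_separating (h1 e he)
  · -- every cycle meeting S contains S
    intro C hcyc hmeet f hfS
    by_contra hfC
    obtain ⟨e, heC, heS⟩ := hmeet
    have hCns : ∀ x ∈ C, x ∉ G.sepEdges := fun x hx =>
      not_separating_of_mem_cycleSet hcyc hx
    have hcyct : (G.deleteEdges G.sepEdges).IsCycleSet
        {x : (G.deleteEdges G.sepEdges).E | x.1 ∈ C} :=
      isCycleSet_delete_of_isCycleSet hcyc hCns
    refine contraction_cycle_absorbs h2 hcyct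
      (et := ⟨e, hCns e heC⟩) (ft := ⟨f, h1 f hfS⟩) heC heS hfS ?_
    intro hcontra
    exact hfC hcontra
  · -- complement condition
    intro f honcyc hfS
    have hfns : ¬ G.IsSeparating f := (onCyc_iff_not_separating f).1 honcyc
    have hftSt : (⟨f, hfns⟩ : (G.deleteEdges G.sepEdges).E) ∉
        {x : (G.deleteEdges G.sepEdges).E | x.1 ∈ S} := hfS
    have hf2ns : ¬ ((G.deleteEdges G.sepEdges).deleteEdges
        {x : (G.deleteEdges G.sepEdges).E | x.1 ∈ S}).IsSeparating ⟨⟨f, hfns⟩, hftSt⟩ :=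
      not_separating_of_sepEdges_empty h3 _
    obtain ⟨D, hD, hfD⟩ := exists_cycleSet_of_not_separating hf2ns
    have hD1 := (isCycleSet_deleteEdges_iff _ _).1 hD
    have hD2 := (isCycleSet_deleteEdges_iff _ _).1 hD1
    refine ⟨_, hD2, ⟨⟨f, hfns⟩, ⟨⟨⟨f, hfns⟩, hftSt⟩, hfD, rfl⟩, rfl⟩, ?_⟩
    rw [Set.eq_empty_iff_forall_notMem]
    rintro x ⟨⟨y, ⟨z, hzD, rfl⟩, rfl⟩, hxS⟩
    exact z.2 hxS

end Multigraph
namespace Multigraph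

/-- If `SB` is contained in a cycle, and every cycle meeting `SB` contains `SB`, then
the core of the contraction along the complement of `SB` is a cycle graph. -/
theorem contraction_core_isCycleGraph {B : Multigraph} {SB : Set B.E}
    (hSne : SB.Nonempty)
    (hsub : ∃ Ct : Set B.E, B.IsCycleSet Ct ∧ SB ⊆ Ct)
    (hmax : ∀ D : Set B.E, B.IsCycleSet D → (D ∩ SB).Nonempty → SB ⊆ D) :
    (B.contractCompl SB).core.IsCycleGraph := by
  classical
  obtain ⟨Ct, hcyct, hSC⟩ := hsub
  obtain ⟨e0, he0S⟩ := hSne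
  have he0C : e0 ∈ Ct := hSC he0S
  -- generic projection of a B-walk into the core
  have claimA : ∀ (v w : B.V) (p : List (B.E × Bool)), B.IsWalk v p w →
      ∀ (hv : ∃ x ∈ (Set.univ : Set (B.contractCompl SB).E),
          (B.contractCompl SB).fst x = Quot.mk (B.deleteEdges SB).Adj v ∨
          (B.contractCompl SB).snd x = Quot.mk (B.deleteEdges SB).Adj v)
        (hw : ∃ x ∈ (Set.univ : Set (B.contractCompl SB).E),
          (B.contractCompl SB).fst x = Quot.mk (B.deleteEdges SB).Adj w ∨
          (B.contractCompl SB).snd x = Quot.mk (B.deleteEdges SB).Adj w),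
        (B.contractCompl SB).core.Reachable
          ⟨Quot.mk (B.deleteEdges SB).Adj v, hv⟩ ⟨Quot.mk (B.deleteEdges SB).Adj w, hw⟩ := by
    intro v w p hp hv hw
    obtain ⟨q, hq, _⟩ := isWalk_contract_proj (S := SB) hp
    obtain ⟨qH, hqH, _⟩ := isWalk_restrict_in
      (C := (Set.univ : Set (B.contractCompl SB).E)) hq (fun s _ => trivial) hv hw
    exact hqH.reachable
  -- connectivity
  have hconn : (B.contractCompl SB).core.Connected := by
    constructor
    · exact ⟨⟨(B.contractCompl SB).fst ⟨e0, he0S⟩, ⟨e0, he0S⟩, trivial, Or.inl rfl⟩⟩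
    · have hub : ∀ (z : (B.contractCompl SB).core.V),
          (B.contractCompl SB).core.Reachable
            ⟨Quot.mk (B.deleteEdges SB).Adj (B.fst e0),
              ⟨⟨e0, he0S⟩, trivial, Or.inl rfl⟩⟩ z := by
        rintro ⟨vK, xK, -, hor⟩
        have hxC : xK.1 ∈ Ct := hSC xK.2
        have hinc0 : (⟨B.fst e0, ⟨e0, he0C, Or.inl rfl⟩⟩ : (B.restrict Ct).V) =
            ⟨B.fst e0, ⟨e0, he0C, Or.inl rfl⟩⟩ := rfl
        rcases hor with hor | hor
        · subst hor
          have hr := (hcyct.1).2 (⟨B.fst e0, ⟨e0, he0C, Or.inl rfl⟩⟩ : (B.restrict Ct).V)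
            ⟨B.fst xK.1, ⟨xK.1, hxC, Or.inl rfl⟩⟩
          erw [reachable_restrict_iff] at hr
          obtain ⟨p, hp, -⟩ := hr
          exact claimA _ _ p hp ⟨⟨e0, he0S⟩, trivial, Or.inl rfl⟩
            ⟨xK, trivial, Or.inl rfl⟩
        · subst hor
          have hr := (hcyct.1).2 (⟨B.fst e0, ⟨e0, he0C, Or.inl rfl⟩⟩ : (B.restrict Ct).V)
            ⟨B.snd xK.1, ⟨xK.1, hxC, Or.inr rfl⟩⟩
          erw [reachable_restrict_iff] at hr
          obtain ⟨p, hp, -⟩ := hr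
          exact claimA _ _ p hp ⟨⟨e0, he0S⟩, trivial, Or.inl rfl⟩
            ⟨xK, trivial, Or.inr rfl⟩
      intro z z'
      exact (hub z).symm.trans (hub z')
  -- bridgelessness
  have hbridge : (B.contractCompl SB).core.sepEdges = ∅ := by
    rw [Set.eq_empty_iff_forall_notMem]
    rintro ⟨xK, htriv⟩ hsepx
    have hxS : xK.1 ∈ SB := xK.2
    have hxC : xK.1 ∈ Ct := hSC hxS
    -- x is non-separating in the cycle Ct
    have hnsep : ¬ (B.restrict Ct).IsSeparating ⟨xK.1, hxC⟩ :=
      not_separating_of_sepEdges_empty hcyct.2.1 _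
    have hreach := not_not.1 hnsep
    rw [reachable_restrict_deleteEdges_iff] at hreach
    obtain ⟨p, hp, hpmem⟩ := hreach
    obtain ⟨q, hq, hqmem⟩ := isWalk_contract_proj (S := SB) hp
    have hq' : (B.contractCompl SB).IsWalk
        ((B.contractCompl SB).fst xK) q ((B.contractCompl SB).snd xK) := hq
    have hv1 : ∃ y ∈ (Set.univ : Set (B.contractCompl SB).E),
        (B.contractCompl SB).fst y = (B.contractCompl SB).fst xK ∨
        (B.contractCompl SB).snd y = (B.contractCompl SB).fst xK :=
      ⟨xK, trivial, Or.inl rfl⟩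
    have hv2 : ∃ y ∈ (Set.univ : Set (B.contractCompl SB).E),
        (B.contractCompl SB).fst y = (B.contractCompl SB).snd xK ∨
        (B.contractCompl SB).snd y = (B.contractCompl SB).snd xK :=
      ⟨xK, trivial, Or.inr rfl⟩
    obtain ⟨qH, hqH, hqHmap⟩ := isWalk_restrict_in
      (C := (Set.univ : Set (B.contractCompl SB).E)) hq' (fun s _ => trivial) hv1 hv2
    have hqHmem : ∀ s ∈ qH, s.1 ∉
        ({⟨xK, trivial⟩} : Set ((B.contractCompl SB).restrict Set.univ).E) := by
      intro s hs hcontra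
      have hsq : (s.1.1, s.2) ∈ q := by
        rw [← hqHmap]
        exact List.mem_map.2 ⟨s, hs, rfl⟩
      obtain ⟨t, htp, hval, -⟩ := hqmem _ hsq
      obtain ⟨hc, hne⟩ := hpmem t htp
      apply hne
      erw [Set.mem_singleton_iff] at hcontra ⊢
      apply Subtype.ext
      show t.1 = xK.1
      rw [← hval]
      exact congrArg (fun y : (B.contractCompl SB).E => y.1) (congrArg Subtype.val hcontra)
    obtain ⟨qH1, hqH1, -⟩ := isWalk_deleteEdges_in hqH hqHmem
    exact hsepx hqH1.reachable
  -- b1 = 1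
  have hb1 : (B.contractCompl SB).core.b1 = 1 := by
    have hcH : (B.contractCompl SB).core.numComponents = 1 := numComponents_eq_one hconn
    have he0ns : ¬ (B.contractCompl SB).core.IsSeparating ⟨⟨e0, he0S⟩, trivial⟩ :=
      not_separating_of_sepEdges_empty hbridge _
    have hc1 : ((B.contractCompl SB).core.deleteEdges
        {⟨⟨e0, he0S⟩, trivial⟩}).numComponents = 1 := by
      rw [numComponents_deleteEdges_of_not_separating _ _ he0ns, hcH]
    have hN1 := card_V_le_numComponents_add_card_E
      (Nat.card ((B.contractCompl SB).core.deleteEdges {⟨⟨e0, he0S⟩, trivial⟩}).E) _ rfl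
    have hE1 := card_E_deleteEdges_singleton (G := (B.contractCompl SB).core)
      ⟨⟨e0, he0S⟩, trivial⟩
    have hVeq : Nat.card ((B.contractCompl SB).core.deleteEdges
        {⟨⟨e0, he0S⟩, trivial⟩}).V = Nat.card (B.contractCompl SB).core.V := rfl
    -- so card V ≤ card E
    rw [hc1, hVeq] at hN1
    -- now show card E ≤ card V by contradiction
    have hle : Nat.card (B.contractCompl SB).core.E ≤ Nat.card (B.contractCompl SB).core.V := by
      by_contra hgt
      push_neg at hgt
      -- some edge of core∖e0 is non-separating there
      have hnotall : ¬ ∀ xE : ((B.contractCompl SB).core.deleteEdges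
          {⟨⟨e0, he0S⟩, trivial⟩}).E, ((B.contractCompl SB).core.deleteEdges
          {⟨⟨e0, he0S⟩, trivial⟩}).IsSeparating xE := by
        intro hall
        have := card_V_eq_of_all_separating
          (Nat.card ((B.contractCompl SB).core.deleteEdges {⟨⟨e0, he0S⟩, trivial⟩}).E)
          _ rfl hall
        rw [hc1, hVeq] at this
        omega
      push_neg at hnotall
      obtain ⟨xE, hxEns⟩ := hnotall
      -- unpack the edge
      have hreach2 := not_not.1 hxEns
      rw [reachable_deleteEdges_iff] at hreach2
      obtain ⟨q2, hq2, hq2mem⟩ := hreach2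
      -- walk in core avoiding both e0H and xE.1
      have hq3 := isWalk_deleteEdges_out hq2
      have hq3mem : ∀ s ∈ q2.map (fun s => (s.1.1, s.2)),
          s.1 ≠ (⟨⟨e0, he0S⟩, trivial⟩ : (B.contractCompl SB).core.E) ∧ s.1 ≠ xE.1 := by
        intro s hs
        obtain ⟨t, ht, rfl⟩ := List.mem_map.1 hs
        constructor
        · intro hcontra
          exact t.1.2 (by erw [Set.mem_singleton_iff]; exact hcontra)
        · intro hcontra
          exact hq2mem t ht (by rw [Set.mem_singleton_iff]; exact Subtype.ext hcontra)
      -- down to the contraction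
      have hq4 := isWalk_restrict_out hq3
      -- lift to B
      have hx : xE.1.1.1 ∈ SB := xE.1.1.2
      have hxne0 : xE.1.1.1 ≠ e0 := by
        intro hcontra
        apply xE.2
        erw [Set.mem_singleton_iff]
        apply Subtype.ext
        apply Subtype.ext
        exact hcontra
      have hq4mem : ∀ s ∈ (q2.map (fun s => (s.1.1, s.2))).map (fun s => (s.1.1, s.2)),
          s.1 ∉ ({(⟨e0, he0S⟩ : (B.contractCompl SB).E), xE.1.1} : Set (B.contractCompl SB).E) := by
        intro s hs hcontra
        obtain ⟨t, ht, rfl⟩ := List.mem_map.1 hs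
        have := hq3mem t ht
        rcases hcontra with hcontra | hcontra
        · exact this.1 (Subtype.ext hcontra)
        · exact this.2 (Subtype.ext hcontra)
      obtain ⟨pB, hpB, hpBmem⟩ := contract_lift_walk (F := ({(⟨e0, he0S⟩ : (B.contractCompl SB).E), xE.1.1} :
          Set (B.contractCompl SB).E)) _ hq4 hq4mem
        (v := B.fst xE.1.1.1) (w := B.snd xE.1.1.1) rfl rfl
      -- pB avoids e0 and x
      have hpBne : ∀ s ∈ pB, s.1 ≠ e0 ∧ s.1 ≠ xE.1.1.1 := by
        intro s hs
        rcases hpBmem s hs with hns | ⟨hsS, hnF⟩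
        · constructor
          · intro hcontra; exact hns (hcontra ▸ he0S)
          · intro hcontra; exact hns (hcontra ▸ hx)
        · constructor
          · intro hcontra
            apply hnF
            left
            apply Subtype.ext
            exact hcontra
          · intro hcontra
            apply hnF
            right
            apply Subtype.ext
            exact hcontra
      -- so x is non-separating in B ∖ {e0}
      have hxmem : (xE.1.1.1 : B.E) ∉ ({e0} : Set B.E) := by
        rw [Set.mem_singleton_iff]; exact hxne0
      obtain ⟨p1, hp1, hp1map⟩ := isWalk_deleteEdges_in (T := ({e0} : Set B.E)) hpB
        (fun s hs hmem => (hpBne s hs).1 (by rwa [Set.mem_singleton_iff] at hmem))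
      have hp1mem : ∀ s ∈ p1, s.1 ∉ ({⟨xE.1.1.1, hxmem⟩} :
          Set (B.deleteEdges {e0}).E) := by
        intro s hs hcontra
        have hsp : (s.1.1, s.2) ∈ pB := by
          rw [← hp1map]
          exact List.mem_map.2 ⟨s, hs, rfl⟩
        apply (hpBne _ hsp).2
        erw [Set.mem_singleton_iff] at hcontra
        exact congrArg Subtype.val hcontra
      obtain ⟨p2, hp2, -⟩ := isWalk_deleteEdges_in hp1 hp1mem
      have hxns : ¬ (B.deleteEdges {e0}).IsSeparating ⟨xE.1.1.1, hxmem⟩ := by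
        intro hsep
        exact hsep hp2.reachable
      obtain ⟨D, hD, hxD⟩ := exists_cycleSet_of_not_separating hxns
      have hD1 := (isCycleSet_deleteEdges_iff _ _).1 hD
      -- the lifted cycle meets SB but misses e0: contradiction with hmax
      have hmeet : ((Subtype.val '' D) ∩ SB).Nonempty :=
        ⟨xE.1.1.1, ⟨⟨xE.1.1.1, hxmem⟩, hxD, rfl⟩, hx⟩
      have hsub2 := hmax _ hD1 hmeet
      have he0D := hsub2 he0S
      obtain ⟨z, -, hz⟩ := he0D
      exact z.2 (by rw [Set.mem_singleton_iff]; exact hz)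
    have hEVnat : Nat.card (B.contractCompl SB).core.E =
        Nat.card (B.contractCompl SB).core.V := le_antisymm hle (by omega)
    unfold b1
    rw [hcH, hEVnat]
    push_cast
    ring
  exact ⟨hconn, hbridge, hb1⟩

end Multigraph
namespace Multigraph

variable {G : Multigraph}

theorem QSet.isC1 {S : Set G.E} (h : G.QSet S) : G.IsC1 S := by
  classical
  obtain ⟨hne, hq1, hq2, hq3⟩ := h
  have h1 : ∀ e ∈ S, ¬ G.IsSeparating e := fun e he =>
    (onCyc_iff_not_separating e).1 (hq1 e he)
  refine ⟨h1, ?_, ?_⟩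
  · -- the core of the contraction is a cycle graph
    apply contraction_core_isCycleGraph
    · obtain ⟨e0, he0⟩ := hne
      exact ⟨⟨e0, h1 e0 he0⟩, he0⟩
    · obtain ⟨e0, he0⟩ := hne
      obtain ⟨C0, hC0, he0C⟩ := hq1 e0 he0
      have hSC0 : S ⊆ C0 := hq2 C0 hC0 ⟨e0, he0C, he0⟩
      have hC0ns : ∀ x ∈ C0, x ∉ G.sepEdges := fun x hx =>
        not_separating_of_mem_cycleSet hC0 hx
      refine ⟨{x : (G.deleteEdges G.sepEdges).E | x.1 ∈ C0},
        isCycleSet_delete_of_isCycleSet hC0 hC0ns, ?_⟩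
      intro x hx
      exact hSC0 hx
    · intro D hD hmeet
      have hD1 := (isCycleSet_deleteEdges_iff _ _).1 hD
      obtain ⟨y, hyD, hyS⟩ := hmeet
      have hmeet' : ((Subtype.val '' D) ∩ S).Nonempty := ⟨y.1, ⟨y, hyD, rfl⟩, hyS⟩
      have hsub := hq2 _ hD1 hmeet'
      intro x hx
      obtain ⟨z, hzD, hz⟩ := hsub hx
      have hzx : z = x := Subtype.ext hz
      exact hzx ▸ hzD
  · -- no separating edges after deleting S
    rw [Set.eq_empty_iff_forall_notMem]
    intro f2 hsepf
    have hfns : ¬ G.IsSeparating f2.1.1 := f2.1.2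
    have hfS : f2.1.1 ∉ S := f2.2
    obtain ⟨C, hC, hfC, hCS⟩ := hq3 f2.1.1 (exists_cycleSet_of_not_separating hfns) hfS
    have hCns : ∀ x ∈ C, x ∉ G.sepEdges := fun x hx =>
      not_separating_of_mem_cycleSet hC hx
    have hCt := isCycleSet_delete_of_isCycleSet hC hCns
    have hdisj2 : ∀ x ∈ {y : (G.deleteEdges G.sepEdges).E | y.1 ∈ C},
        x ∉ {y : (G.deleteEdges G.sepEdges).E | y.1 ∈ S} := by
      intro x hx hxS
      have hxx : x.1 ∈ C ∩ S := ⟨hx, hxS⟩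
      rw [hCS] at hxx
      exact hxx
    have hC2 := isCycleSet_delete_of_isCycleSet hCt hdisj2
    have hf2C : f2 ∈ {y : ((G.deleteEdges G.sepEdges).deleteEdges
        {y : (G.deleteEdges G.sepEdges).E | y.1 ∈ S}).E |
          y.1 ∈ {z : (G.deleteEdges G.sepEdges).E | z.1 ∈ C}} := hfC
    exact not_separating_of_mem_cycleSet hC2 hf2C hsepf

theorem isC1_iff_qset (S : Set G.E) : G.IsC1 S ↔ G.QSet S :=
  ⟨IsC1.qset, QSet.isC1⟩

theorem qset_image_iff {G G' : Multigraph} (ε : G.E ≃ G'.E)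
    (h : Multigraph.IsCyclicBijection G G' ε) (S : Set G.E) :
    G.QSet S ↔ G'.QSet (⇑ε '' S) := by
  have hcyc' : ∀ C' : Set G'.E, G'.IsCycleSet C' ↔ G.IsCycleSet (⇑ε.symm '' C') := by
    intro C'
    have := h (⇑ε.symm '' C')
    rw [this]
    have himg : ⇑ε '' (⇑ε.symm '' C') = C' := by
      rw [Set.image_image]
      simp
    rw [himg]
  have honcyc : ∀ e : G.E, G.OnCyc e ↔ G'.OnCyc (ε e) := by
    intro e
    constructor
    · rintro ⟨C, hC, heC⟩
      exact ⟨⇑ε '' C, (h C).1 hC, ⟨e, heC, rfl⟩⟩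
    · rintro ⟨C', hC', heC'⟩
      refine ⟨⇑ε.symm '' C', (hcyc' C').1 hC', ⟨ε e, heC', by simp⟩⟩
  constructor
  · rintro ⟨hne, hq1, hq2, hq3⟩
    refine ⟨Set.image_nonempty.2 hne, ?_, ?_, ?_⟩
    · rintro e' ⟨e, heS, rfl⟩
      exact (honcyc e).1 (hq1 e heS)
    · intro C' hC' hmeet
      have hC := (hcyc' C').1 hC'
      have hmeet' : ((⇑ε.symm '' C') ∩ S).Nonempty := by
        obtain ⟨y, hyC', ⟨x, hxS, rfl⟩⟩ := hmeet
        exact ⟨x, ⟨ε x, hyC', by simp⟩, hxS⟩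
      have hsub := hq2 _ hC hmeet'
      rintro y ⟨x, hxS, rfl⟩
      obtain ⟨z, hzC', hz⟩ := hsub hxS
      have : ε x = z := by rw [← hz]; simp
      exact this ▸ hzC'
    · rintro f' honcyc' hf'
      have honcycf : G.OnCyc (ε.symm f') := by
        have := (honcyc (ε.symm f')).2
        apply this
        simpa using honcyc'
      have hfS : ε.symm f' ∉ S := by
        intro hmem
        exact hf' ⟨ε.symm f', hmem, by simp⟩
      obtain ⟨C, hC, hfC, hCS⟩ := hq3 _ honcycf hfS
      refine ⟨⇑ε '' C, (h C).1 hC, ⟨ε.symm f', hfC, by simp⟩, ?_⟩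
      rw [← Set.image_inter ε.injective, hCS, Set.image_empty]
  · rintro ⟨hne, hq1, hq2, hq3⟩
    refine ⟨?_, ?_, ?_, ?_⟩
    · exact Set.image_nonempty.1 hne
    · intro e heS
      exact (honcyc e).2 (hq1 (ε e) ⟨e, heS, rfl⟩)
    · intro C hC hmeet
      have hC' := (h C).1 hC
      have hmeet' : ((⇑ε '' C) ∩ (⇑ε '' S)).Nonempty := by
        obtain ⟨x, hxC, hxS⟩ := hmeet
        exact ⟨ε x, ⟨x, hxC, rfl⟩, ⟨x, hxS, rfl⟩⟩
      have hsub := hq2 _ hC' hmeet'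
      intro x hxS
      obtain ⟨z, hzC, hz⟩ := hsub ⟨x, hxS, rfl⟩
      have : z = x := ε.injective hz
      exact this ▸ hzC
    · intro f honcycf hfS
      have honcyc' : G'.OnCyc (ε f) := (honcyc f).1 honcycf
      have hf' : ε f ∉ ⇑ε '' S := by
        rintro ⟨x, hxS, hx⟩
        exact hfS ((ε.injective hx) ▸ hxS)
      obtain ⟨C', hC', hfC', hCS'⟩ := hq3 _ honcyc' hf'
      refine ⟨⇑ε.symm '' C', (hcyc' C').1 hC', ⟨ε f, hfC', by simp⟩, ?_⟩
      rw [Set.eq_empty_iff_forall_notMem]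
      rintro x ⟨⟨y, hyC', rfl⟩, hxS⟩
      have : y ∈ C' ∩ (⇑ε '' S) := ⟨hyC', ⟨ε.symm y, hxS, by simp⟩⟩
      rw [hCS'] at this
      exact this

end Multigraph

/-- A cyclic bijection `ε` induces a bijection between C1-sets,
`S ↦ ε(S)`, preserving cardinalities. -/
theorem cyclicBijection_isC1 (G G' : Multigraph) (ε : G.E ≃ G'.E)
    (h : Multigraph.IsCyclicBijection G G' ε) :
    (∀ S : Set G.E, G.IsC1 S ↔ G'.IsC1 (⇑ε '' S)) ∧
    (∀ S : Set G.E, G.IsC1 S → Nat.card ↥(⇑ε '' S) = Nat.card ↥S) := by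
  constructor
  · intro S
    rw [Multigraph.isC1_iff_qset, Multigraph.isC1_iff_qset]
    exact Multigraph.qset_image_iff ε h S
  · intro S _
    exact Nat.card_image_of_injective ε.injective S
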